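/- arXiv:2110.09844 — 7 statements merged into one kernel-verified Lean document; each statement's English description precedes it below -/
import Mathlib

section
/- For any pointed σ-structure (A,a) over a unimodal vocabulary and any k > 0, Hk-coalgebras α : (A,a) → Hk(A,a) are in bijective correspondence with generated tree covers of (A,a) of height at most k+1. -/
/-!
A coalgebra `α` assigns to every `w` a play `α w` ending in `w`, and the comultiplication law
says that the prefixes of `α w` are the plays that `α` assigns to the entries of `α w`. Hence
"`α x` is a prefix of `α y`" is a tree order whose branch below `w` is `α w`: lifting `E` to
plays makes it a cover, validity of the plays makes it generated, and their length bounds its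
height.
Conversely, in a generated tree cover of height at most `k + 1` the predecessors of `w` form a
chain of at most `k + 1` elements; listed in increasing order they give a valid play, and its
prefixes are the lists belonging to its entries. The two constructions are mutually inverse
because a finite chain has exactly one increasing enumeration.
-/

/-- A pointed structure over a unimodal vocabulary: unary predicates indexed by `ι`,
one transition relation `E`, and a distinguished point. -/
structure PStr (ι : Type) where
  W : Type
  p : ι → W → Prop
  E : W → W → Prop
  pt : W

namespace PStr

variable {ι : Type}

/-- The universe of the hybrid comonad `Hk(A,a)`: nonempty plays of length ≤ k+1
starting at the distinguished point, in which every later element is seen (via `E`)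
from some earlier element. -/
def Valid (A : PStr ι) (k : ℕ) (s : List A.W) : Prop :=
  s ≠ [] ∧ s.head? = some A.pt ∧ s.length ≤ k + 1 ∧
    ∀ j : Fin s.length, 0 < (j : ℕ) →
      ∃ i : Fin s.length, (i : ℕ) < (j : ℕ) ∧ A.E (s.get i) (s.get j)

/-- The last element of a play (the counit ε). -/
def lastW (A : PStr ι) (s : List A.W) : A.W := s.getLast?.getD A.pt

/-- Lifting of a unary predicate to plays: it holds of the last element. -/
def liftP (A : PStr ι) (i : ι) (s : List A.W) : Prop := s ≠ [] ∧ A.p i (lastW A s)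

/-- Lifting of the transition relation to plays: the plays are comparable in the
prefix order and `E` holds of their last elements. -/
def liftE (A : PStr ι) (s t : List A.W) : Prop :=
  (s <+: t ∨ t <+: s) ∧ s ≠ [] ∧ t ≠ [] ∧ A.E (lastW A s) (lastW A t)

end PStr


namespace PStr

variable {ι : Type}

/-- A coalgebra `α : (A,a) → Hk(A,a)` for the hybrid comonad: a homomorphism of
pointed structures landing in valid plays, satisfying the counit and
comultiplication laws.  (Here `δ` sends a play to its list of nonempty prefixes and
`Hk α` acts by mapping `α` over a play, so the comultiplication law reads:
the `(j+1)`-st prefix of `α w` equals `α` of the `j`-th entry of `α w`.) -/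
def IsCoalg (A : PStr ι) (k : ℕ) (α : A.W → List A.W) : Prop :=
  (∀ w, Valid A k (α w)) ∧
  α A.pt = [A.pt] ∧
  (∀ i w, A.p i w → liftP A i (α w)) ∧
  (∀ w w', A.E w w' → liftE A (α w) (α w')) ∧
  (∀ w, lastW A (α w) = w) ∧
  (∀ w, ∀ j : Fin (α w).length, (α w).take ((j : ℕ) + 1) = α ((α w).get j))

/-- A generated tree cover of `(A,a)` of height ≤ n: a tree partial order on the
universe with least element the distinguished point, in which Gaifman-adjacent
elements are comparable, every non-root element is seen via `E` from a strictly
smaller element, and every chain has at most `n` elements. -/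
def GenTreeCover (A : PStr ι) (r : A.W → A.W → Prop) (n : ℕ) : Prop :=
  IsPartialOrder A.W r ∧
  (∀ x, r A.pt x) ∧
  (∀ x y z, r y x → r z x → (r y z ∨ r z y)) ∧
  (∀ x y, x ≠ y → (A.E x y ∨ A.E y x) → (r x y ∨ r y x)) ∧
  (∀ x, x ≠ A.pt → ∃ y, r y x ∧ y ≠ x ∧ A.E y x) ∧
  (∀ C : Set A.W, IsChain r C → C.encard ≤ (n : ℕ∞))

end PStr

section SortedEnum

variable {α : Type*} {r : α → α → Prop} {s : Set α} {l l₁ l₂ : List α}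

structure IsSortedEnum (r : α → α → Prop) (s : Set α) (l : List α) : Prop where
  pairwise : l.Pairwise r
  nodup : l.Nodup
  mem_iff : ∀ x, x ∈ l ↔ x ∈ s

theorem IsSortedEnum.eq [Std.Antisymm r] (h₁ : IsSortedEnum r s l₁)
    (h₂ : IsSortedEnum r s l₂) : l₁ = l₂ :=
  List.Perm.eq_of_pairwise (fun _ _ _ _ => antisymm) h₁.pairwise h₂.pairwise <|
    (List.perm_ext_iff_of_nodup h₁.nodup h₂.nodup).2 fun x =>
      (h₁.mem_iff x).trans (h₂.mem_iff x).symm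

theorem exists_isSortedEnum [IsTrans α r] (hs : s.Finite)
    (htotal : ∀ x ∈ s, ∀ y ∈ s, r x y ∨ r y x) : ∃ l, IsSortedEnum r s l := by
  classical
  have := hs.fintype
  -- `mergeSort` needs a total relation, and `r` is total on `s` only.
  let sorted : List s := (Finset.univ : Finset s).toList.mergeSort fun a b => decide (r a b)
  have hsorted : sorted.Pairwise fun a b : s => r a b :=
    (List.pairwise_mergeSort (le := fun a b : s => decide (r a b))
      (fun _ _ _ hab hbc =>
        decide_eq_true (trans_of r (of_decide_eq_true hab) (of_decide_eq_true hbc)))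
      (fun (a b : s) => by simpa using htotal a a.2 b b.2) _).imp of_decide_eq_true
  refine ⟨sorted.map Subtype.val, List.pairwise_map.2 hsorted, ?_, fun x => by simp [sorted]⟩
  exact ((List.mergeSort_perm _ _).nodup_iff.2 (Finset.nodup_toList _)).map Subtype.val_injective

theorem List.Pairwise.rel_get_iff_le [Std.Refl r] [Std.Antisymm r] (hp : l.Pairwise r)
    (hn : l.Nodup) {i j : Fin l.length} : r (l.get i) (l.get j) ↔ i ≤ j := by
  refine ⟨fun h => not_lt.1 fun hji => hji.ne' ?_, fun h => ?_⟩
  · exact hn.get_inj_iff.1 (antisymm h (List.pairwise_iff_get.1 hp _ _ hji))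
  · rcases h.lt_or_eq with h | rfl
    · exact List.pairwise_iff_get.1 hp _ _ h
    · exact refl _

theorem List.Pairwise.mem_take_succ_iff [Std.Refl r] [Std.Antisymm r] (hp : l.Pairwise r)
    (hn : l.Nodup) {j : Fin l.length} {x : α} :
    x ∈ l.take (j + 1) ↔ x ∈ l ∧ r x (l.get j) := by
  constructor
  · intro hx
    obtain ⟨i, hi, rfl⟩ := List.mem_take_iff_getElem.1 hx
    refine ⟨List.getElem_mem _, (hp.rel_get_iff_le hn (i := ⟨i, by omega⟩)).2 ?_⟩
    exact Fin.mk_le_of_le_val (by omega)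
  · rintro ⟨hx, hxj⟩
    obtain ⟨i, rfl⟩ := List.mem_iff_get.1 hx
    have hij : i ≤ j := (hp.rel_get_iff_le hn).1 hxj
    exact List.mem_take_iff_getElem.2 ⟨i, by omega, rfl⟩

-- An arbitrary list when `{y | r y w}` has no sorted enumeration.
noncomputable def branch (r : α → α → Prop) (w : α) : List α :=
  Classical.epsilon (IsSortedEnum r {y | r y w})

variable [Std.Refl r] [Std.Antisymm r] {w : α}

theorem IsSortedEnum.take [IsTrans α r] (h : IsSortedEnum r {y | r y w} l) (j : Fin l.length) :
    IsSortedEnum r {y | r y (l.get j)} (l.take (j + 1)) where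
  pairwise := h.pairwise.sublist (List.take_sublist _ _)
  nodup := h.nodup.sublist (List.take_sublist _ _)
  mem_iff x := by
    rw [h.pairwise.mem_take_succ_iff h.nodup, h.mem_iff, Set.mem_ofPred_eq, Set.mem_ofPred_eq]
    exact and_iff_right_of_imp fun hx => trans_of r hx ((h.mem_iff _).1 (List.get_mem _ _))

theorem IsSortedEnum.getLast_eq (h : IsSortedEnum r {y | r y w} l) (hl : l ≠ []) :
    l.getLast hl = w := by
  obtain ⟨i, hi⟩ := List.mem_iff_get.1 ((h.mem_iff w).2 (refl w))
  have hlast : l.getLast hl = l.get ⟨l.length - 1, by grind⟩ := List.getLast_eq_getElem hl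
  refine antisymm ((h.mem_iff _).1 (List.getLast_mem hl)) ?_
  rw [hlast, ← hi, h.pairwise.rel_get_iff_le h.nodup]
  exact Fin.le_iff_val_le_val.2 (by dsimp; omega)

end SortedEnum

namespace PStr

variable {ι : Type}

namespace GenTreeCover

variable {A : PStr ι} {r : A.W → A.W → Prop} {n k : ℕ}

theorem isChain_downset (hc : GenTreeCover A r n) (w : A.W) : IsChain r {y | r y w} :=
  fun x hx y hy _ => hc.2.2.1 w x y hx hy

theorem isSortedEnum_branch (hc : GenTreeCover A r n) (w : A.W) :
    IsSortedEnum r {y | r y w} (branch r w) := by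
  have := hc.1
  have hfinite : {y | r y w}.Finite := Set.encard_lt_top_iff.1 <|
    (hc.2.2.2.2.2 _ (hc.isChain_downset w)).trans_lt (WithTop.coe_lt_top _)
  exact Classical.epsilon_spec (exists_isSortedEnum hfinite fun x hx y hy => hc.2.2.1 w x y hx hy)

theorem mem_branch_iff (hc : GenTreeCover A r n) {x w : A.W} : x ∈ branch r w ↔ r x w :=
  (hc.isSortedEnum_branch w).mem_iff x

theorem branch_ne_nil (hc : GenTreeCover A r n) (w : A.W) : branch r w ≠ [] :=
  have := hc.1
  List.ne_nil_of_mem (hc.mem_branch_iff.2 (refl w))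

theorem take_branch (hc : GenTreeCover A r n) (w : A.W) (j : Fin (branch r w).length) :
    (branch r w).take (j + 1) = branch r ((branch r w).get j) := by
  have := hc.1
  exact ((hc.isSortedEnum_branch w).take j).eq (hc.isSortedEnum_branch _)

theorem branch_prefix_branch_iff (hc : GenTreeCover A r n) {x w : A.W} :
    branch r x <+: branch r w ↔ r x w := by
  have := hc.1
  refine ⟨fun h => hc.mem_branch_iff.1 (h.subset (hc.mem_branch_iff.2 (refl x))), fun h => ?_⟩
  obtain ⟨j, rfl⟩ := List.mem_iff_get.1 (hc.mem_branch_iff.2 h)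
  rw [← hc.take_branch]
  exact List.take_prefix _ _

theorem branch_pt (hc : GenTreeCover A r n) : branch r A.pt = [A.pt] := by
  have := hc.1
  refine (hc.isSortedEnum_branch A.pt).eq
    ⟨List.pairwise_singleton _ _, List.nodup_singleton _, fun x => ?_⟩
  rw [List.mem_singleton, Set.mem_ofPred_eq]
  exact ⟨fun h => h ▸ refl _, fun h => antisymm h (hc.2.1 x)⟩

theorem head?_branch (hc : GenTreeCover A r n) (w : A.W) : (branch r w).head? = some A.pt := by
  obtain ⟨t, ht⟩ := hc.branch_prefix_branch_iff.2 (hc.2.1 w)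
  rw [← ht, hc.branch_pt]
  rfl

theorem lastW_branch (hc : GenTreeCover A r n) (w : A.W) : lastW A (branch r w) = w := by
  have := hc.1
  rw [lastW, List.getLast?_eq_some_getLast (hc.branch_ne_nil w), Option.getD_some,
    (hc.isSortedEnum_branch w).getLast_eq]

theorem length_branch_le (hc : GenTreeCover A r n) (w : A.W) : (branch r w).length ≤ n := by
  classical
  have h := hc.2.2.2.2.2 _ (hc.isChain_downset w)
  have hset : {y | r y w} = ((branch r w).toFinset : Set A.W) := by
    ext x
    simp [hc.mem_branch_iff]
  rwa [hset, Set.encard_coe_eq_coe_finsetCard,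
    List.toFinset_card_of_nodup (hc.isSortedEnum_branch w).nodup, Nat.cast_le] at h

theorem valid_branch (hc : GenTreeCover A r (k + 1)) (w : A.W) : Valid A k (branch r w) := by
  have := hc.1
  have hw := hc.isSortedEnum_branch w
  refine ⟨hc.branch_ne_nil w, hc.head?_branch w, hc.length_branch_le w, fun j hj => ?_⟩
  have hpt : (branch r w).get ⟨0, by omega⟩ = A.pt := by
    have h := hc.head?_branch w
    rwa [List.head?_eq_getElem?, List.getElem?_eq_getElem (by omega), Option.some_inj] at h
  have hx : (branch r w).get j ≠ A.pt := fun h =>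
    hj.ne' (congrArg Fin.val (hw.nodup.get_inj_iff.1 (h.trans hpt.symm)))
  obtain ⟨y, hyx, hyne, hyE⟩ := hc.2.2.2.2.1 _ hx
  obtain ⟨i, rfl⟩ := List.mem_iff_get.1
    ((hw.mem_iff y).2 (trans_of r hyx ((hw.mem_iff _).1 (List.get_mem _ _))))
  have hij : i ≤ j := (hw.pairwise.rel_get_iff_le hw.nodup).1 hyx
  exact ⟨i, hij.lt_of_ne fun h => hyne (h ▸ rfl), hyE⟩

theorem isCoalg_branch (hc : GenTreeCover A r (k + 1)) : IsCoalg A k (branch r) := by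
  refine ⟨hc.valid_branch, hc.branch_pt, fun i w hp => ?_, fun w w' hE => ?_, hc.lastW_branch,
    hc.take_branch⟩
  · exact ⟨hc.branch_ne_nil w, by rwa [hc.lastW_branch]⟩
  · have hcomparable : branch r w <+: branch r w' ∨ branch r w' <+: branch r w := by
      by_cases hww : w = w'
      · exact .inl (hww ▸ List.prefix_refl _)
      · simpa only [hc.branch_prefix_branch_iff] using hc.2.2.2.1 w w' hww (.inl hE)
    refine ⟨hcomparable, hc.branch_ne_nil _, hc.branch_ne_nil _, ?_⟩
    rwa [hc.lastW_branch, hc.lastW_branch]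

end GenTreeCover

namespace IsCoalg

variable {A : PStr ι} {k : ℕ} {α : A.W → List A.W}

theorem injective (hα : IsCoalg A k α) : Function.Injective α :=
  Function.LeftInverse.injective (g := lastW A) hα.2.2.2.2.1

theorem take_succ (hα : IsCoalg A k α) (w : A.W) (j : Fin (α w).length) :
    (α w).take (j + 1) = α ((α w).get j) :=
  hα.2.2.2.2.2 w j

theorem length_apply_get (hα : IsCoalg A k α) (w : A.W) (j : Fin (α w).length) :
    (α ((α w).get j)).length = j + 1 := by
  rw [← hα.take_succ, List.length_take]
  omega

theorem get_length_sub_one (hα : IsCoalg A k α) (w : A.W)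
    (h : (α w).length - 1 < (α w).length) : (α w).get ⟨_, h⟩ = w := by
  refine hα.injective ?_
  rw [← hα.take_succ, List.take_of_length_le (by dsimp; omega)]

theorem mem_iff_prefix (hα : IsCoalg A k α) {x w : A.W} : x ∈ α w ↔ α x <+: α w := by
  refine ⟨fun h => ?_, fun h => h.subset ?_⟩
  · obtain ⟨j, rfl⟩ := List.mem_iff_get.1 h
    rw [← hα.take_succ]
    exact List.take_prefix _ _
  · have hlen := List.length_pos_iff.2 (hα.1 x).1
    have hx := List.get_mem (α x) ⟨_, Nat.sub_one_lt_of_lt hlen⟩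
    rwa [hα.get_length_sub_one] at hx

theorem apply_pt_prefix (hα : IsCoalg A k α) (w : A.W) : α A.pt <+: α w := by
  obtain ⟨t, ht⟩ := List.head?_eq_some_iff.1 (hα.1 w).2.1
  exact hα.mem_iff_prefix.1 (ht ▸ List.mem_cons_self)

theorem exists_E_of_ne_pt (hα : IsCoalg A k α) {x : A.W} (hx : x ≠ A.pt) :
    ∃ y, α y <+: α x ∧ y ≠ x ∧ A.E y x := by
  have hlen : 1 < (α x).length := by
    by_contra! h
    have hlen1 : (α A.pt).length = (α x).length := by
      rw [hα.2.1, List.length_singleton]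
      have := List.length_pos_iff.2 (hα.1 x).1
      omega
    exact hx (hα.injective ((hα.apply_pt_prefix x).eq_of_length hlen1)).symm
  obtain ⟨i, hi, hE⟩ := (hα.1 x).2.2.2 ⟨_, Nat.sub_one_lt_of_lt hlen⟩ (by dsimp; omega)
  rw [hα.get_length_sub_one] at hE
  refine ⟨(α x).get i, ?_, fun h => ?_, hE⟩
  · rw [← hα.take_succ]
    exact List.take_prefix _ _
  · have := hα.length_apply_get x i
    rw [h] at this
    dsimp at hi
    omega

theorem encard_chain_le (hα : IsCoalg A k α) {C : Set A.W}
    (hC : IsChain (fun x y => α x <+: α y) C) : C.encard ≤ (k + 1 : ℕ) := by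
  have hinj : Set.InjOn (fun x => (α x).length) C := fun x hx y hy hxy => by
    by_contra hne
    rcases hC hx hy hne with h | h
    · exact hne (hα.injective (h.eq_of_length hxy))
    · exact hne (hα.injective (h.eq_of_length hxy.symm)).symm
  have himage : (fun x => (α x).length) '' C ⊆ Finset.Icc 1 (k + 1) := by
    rintro _ ⟨x, -, rfl⟩
    simpa using ⟨List.length_pos_iff.2 (hα.1 x).1, (hα.1 x).2.2.1⟩
  calc C.encard = ((fun x => (α x).length) '' C).encard := hinj.encard_image.symm
    _ ≤ (Finset.Icc 1 (k + 1) : Set ℕ).encard := Set.encard_mono himage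
    _ = (k + 1 : ℕ) := by
      rw [Set.encard_coe_eq_coe_finsetCard, Nat.card_Icc, Nat.add_sub_cancel]

theorem genTreeCover (hα : IsCoalg A k α) :
    GenTreeCover A (fun x y => α x <+: α y) (k + 1) := by
  refine ⟨?_, hα.apply_pt_prefix, fun _ _ _ => List.prefix_or_prefix_of_prefix, ?_,
    fun _ => hα.exists_E_of_ne_pt, fun _ => hα.encard_chain_le⟩
  · exact { refl := fun _ => List.prefix_refl _
            trans := fun _ _ _ => List.IsPrefix.trans
            antisymm := fun _ _ h h' =>
              hα.injective (h.eq_of_length (le_antisymm h.length_le h'.length_le)) }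
  · rintro x y - (hE | hE)
    · exact (hα.2.2.2.1 x y hE).1
    · exact (hα.2.2.2.1 y x hE).1.symm

theorem isSortedEnum_apply (hα : IsCoalg A k α) (w : A.W) :
    IsSortedEnum (fun x y => α x <+: α y) {y | α y <+: α w} (α w) where
  pairwise := List.pairwise_iff_get.2 fun i j hij => by
    rw [← hα.take_succ, ← hα.take_succ]
    exact List.take_prefix_take_left (by omega)
  nodup := List.nodup_iff_injective_get.2 fun i j h => by
    have hi := hα.length_apply_get w i
    rw [h, hα.length_apply_get] at hi
    omega
  mem_iff _ := hα.mem_iff_prefix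

theorem branch_eq (hα : IsCoalg A k α) : branch (fun x y => α x <+: α y) = α := by
  have := hα.genTreeCover.1
  exact funext fun w => (hα.genTreeCover.isSortedEnum_branch w).eq (hα.isSortedEnum_apply w)

end IsCoalg

theorem coalgebras_biject_with_generated_tree_covers_general (A : PStr ι) (k : ℕ) :
    Nonempty ({α : A.W → List A.W // IsCoalg A k α} ≃
      {r : A.W → A.W → Prop // GenTreeCover A r (k + 1)}) :=
  ⟨{ toFun := fun α => ⟨fun x y => α.1 x <+: α.1 y, α.2.genTreeCover⟩
     invFun := fun r => ⟨branch r.1, r.2.isCoalg_branch⟩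
     left_inv := fun α => Subtype.ext α.2.branch_eq
     right_inv := fun r =>
       Subtype.ext <| funext₂ fun _ _ => propext r.2.branch_prefix_branch_iff }⟩

/-- For any pointed σ-structure `(A,a)` over a unimodal vocabulary and any `k > 0`,
`Hk`-coalgebras `α : (A,a) → Hk(A,a)` are in bijective correspondence with generated
tree covers of `(A,a)` of height at most `k+1`. -/
theorem coalgebras_biject_with_generated_tree_covers (A : PStr ι) (k : ℕ) (hk : 0 < k) :
    Nonempty ({α : A.W → List A.W // IsCoalg A k α} ≃
      {r : A.W → A.W → Prop // GenTreeCover A r (k + 1)}) :=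
  coalgebras_biject_with_generated_tree_covers_general A k

end PStr
end

section
/- The triple (Hk, ε, (·)*) is a comonad in Kleisli form on the category of pointed σ-structures: for every coKleisli morphism h : Hk(A,a) → (B,b) its extension h* : Hk(A,a) → Hk(B,b), defined by h*(⟨a,a₁,…,a_i⟩) = ⟨h(⟨a⟩), h(⟨a,a₁⟩), …, h(⟨a,a₁,…,a_i⟩)⟩, is a well-defined homomorphism, and the equations ε ∘ h* = h, ε* = id, and (g ∘ h*)* = g* ∘ h* hold. -/
namespace PStr

variable {ι : Type}

/-- `h` is a coKleisli morphism `Hk(A,a) → (B,b)`, presented as a total function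
on lists subject to conditions on valid plays: it sends the distinguished play `⟨a⟩`
to the distinguished point, and preserves the lifted predicates and transition
relation. -/
def IsKleisli (A B : PStr ι) (k : ℕ) (h : List A.W → B.W) : Prop :=
  h [A.pt] = B.pt ∧
  (∀ s, Valid A k s → ∀ i, liftP A i s → B.p i (h s)) ∧
  (∀ s t, Valid A k s → Valid A k t → liftE A s t → B.E (h s) (h t))

/-- The coKleisli extension `h*`, sending a play to the list of values of `h` on its
nonempty prefixes: `h*(⟨a,a₁,…,a_i⟩) = ⟨h⟨a⟩, h⟨a,a₁⟩, …, h⟨a,a₁,…,a_i⟩⟩`. -/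
def ext (A : PStr ι) {β : Type} (h : List A.W → β) (s : List A.W) : List β :=
  (List.range s.length).map fun i => h (s.take (i + 1))

section Extension

variable {A : PStr ι} {β : Type} (h : List A.W → β)

@[simp]
lemma length_ext (s : List A.W) : (ext A h s).length = s.length := by
  simp [ext]

@[simp]
lemma getElem_ext (s : List A.W) (i : ℕ) (hi : i < (ext A h s).length) :
    (ext A h s)[i] = h (s.take (i + 1)) := by
  simp [ext]

lemma ext_ne_nil {s : List A.W} (hs : s ≠ []) : ext A h s ≠ [] := by
  simpa [← List.length_pos_iff] using hs

lemma ext_singleton (a : A.W) : ext A h [a] = [h [a]] := by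
  simp [ext]

lemma ext_take (s : List A.W) (n : ℕ) : ext A h (s.take n) = (ext A h s).take n := by
  refine List.ext_getElem (by simp) fun i _ hi => ?_
  have hin : i + 1 ≤ n := by simp only [List.length_take, length_ext] at hi; omega
  simp [List.take_take, min_eq_left hin]

lemma IsPrefix.ext {s t : List A.W} (hst : s <+: t) : ext A h s <+: ext A h t := by
  rw [List.prefix_iff_eq_take] at hst ⊢
  rw [length_ext, ← ext_take, ← hst]

lemma ext_comp {B : PStr ι} (h : List A.W → B.W) (g : List B.W → β) (s : List A.W) :
    ext A (fun u => g (ext A h u)) s = ext B g (ext A h s) :=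
  List.ext_getElem (by simp) fun i _ _ => by simp [ext_take]

end Extension

section Last

variable {A : PStr ι}

lemma lastW_take (s : List A.W) {i : ℕ} (hi : i < s.length) :
    lastW A (s.take (i + 1)) = s[i] := by
  simp [lastW, List.getLast?_take, hi]

lemma lastW_ext {B : PStr ι} (h : List A.W → B.W) {s : List A.W} (hs : s ≠ []) :
    lastW B (ext A h s) = h s := by
  have hlen : s.length - 1 + 1 = s.length := by
    have := List.length_pos_iff.mpr hs; omega
  rw [← List.take_length (l := ext A h s), length_ext, ← hlen, lastW_take, getElem_ext,
    hlen, List.take_length]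
  simpa [List.length_pos_iff] using hs

lemma ext_lastW (s : List A.W) : ext A (lastW A) s = s :=
  List.ext_getElem (by simp) fun i _ hi => by simp [lastW_take s hi]

lemma liftE_take {s : List A.W} {i j : ℕ} (hij : i < j) (hj : j < s.length)
    (hE : A.E s[i] s[j]) : liftE A (s.take (i + 1)) (s.take (j + 1)) := by
  refine ⟨Or.inl (List.take_prefix_take_left (by omega)), ?_, ?_,
    by rwa [lastW_take s (hij.trans hj), lastW_take s hj]⟩
  all_goals rw [ne_eq, ← List.length_eq_zero_iff, List.length_take]; omega

end Last

section Valid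

variable {A : PStr ι} {k : ℕ} {s : List A.W}

lemma Valid.ne_nil (hs : Valid A k s) : s ≠ [] := hs.1

lemma Valid.take (hs : Valid A k s) {n : ℕ} (hn : 0 < n) :
    Valid A k (s.take n) := by
  obtain ⟨hne, hhead, hlen, hseen⟩ := hs
  have hpos := List.length_pos_iff.mpr hne
  refine ⟨?_, ?_, ?_, fun j hj => ?_⟩
  · simp only [ne_eq, ← List.length_pos_iff, List.length_take]; omega
  · rwa [List.head?_take, if_neg hn.ne']
  · simp only [List.length_take]; omega
  · have hjn : (j : ℕ) < n ∧ (j : ℕ) < s.length := by simpa using j.2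
    obtain ⟨i, hij, hE⟩ := hseen ⟨j, hjn.2⟩ hj
    replace hij : (i : ℕ) < j := hij
    exact ⟨⟨i, by simp only [List.length_take]; omega⟩, hij, by simpa using hE⟩

end Valid

section Kleisli

variable {A B : PStr ι} {k : ℕ} {h : List A.W → B.W}

lemma isKleisli_lastW (A : PStr ι) (k : ℕ) : IsKleisli A A k (lastW A) :=
  ⟨by simp [lastW], fun _ _ _ hp => hp.2, fun _ _ _ _ he => he.2.2.2⟩

lemma IsKleisli.valid_ext (hh : IsKleisli A B k h) {s : List A.W} (hs : Valid A k s) :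
    Valid B k (ext A h s) := by
  obtain ⟨hpt, -, hmapE⟩ := hh
  have ⟨hne, hhead, hlen, hseen⟩ := hs
  have hpos := List.length_pos_iff.mpr hne
  refine ⟨ext_ne_nil h hne, ?_, by simpa using hlen, fun j hj => ?_⟩
  · have htake : s.take 1 = [A.pt] := by
      rw [List.take_one, hhead]; rfl
    rw [List.head?_eq_getElem?, List.getElem?_eq_getElem (by simpa using hpos), getElem_ext,
      htake, hpt]
  · have hj' : (j : ℕ) < s.length := by simpa using j.2
    obtain ⟨i, hij, hE⟩ := hseen ⟨j, hj'⟩ hj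
    refine ⟨⟨i, by simp only [length_ext]; omega⟩, hij, ?_⟩
    simp only [List.get_eq_getElem, getElem_ext]
    exact hmapE _ _ (hs.take (by omega)) (hs.take (by omega)) (liftE_take hij hj' hE)

lemma IsKleisli.liftP_ext (hh : IsKleisli A B k h) {s : List A.W} (hs : Valid A k s) {i : ι}
    (hp : liftP A i s) : liftP B i (ext A h s) :=
  ⟨ext_ne_nil h hs.ne_nil, by rw [lastW_ext h hs.ne_nil]; exact hh.2.1 s hs i hp⟩

lemma IsKleisli.liftE_ext (hh : IsKleisli A B k h) {s t : List A.W} (hs : Valid A k s)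
    (ht : Valid A k t) (hst : liftE A s t) : liftE B (ext A h s) (ext A h t) := by
  refine ⟨hst.1.imp (IsPrefix.ext h) (IsPrefix.ext h), ext_ne_nil h hs.ne_nil,
    ext_ne_nil h ht.ne_nil, ?_⟩
  rw [lastW_ext h hs.ne_nil, lastW_ext h ht.ne_nil]
  exact hh.2.2 s t hs ht hst

end Kleisli

theorem hybrid_comonad_in_kleisli_form_general (ι : Type) (k : ℕ) :
    -- ε is a coKleisli morphism Hk(A,a) → (A,a)
    (∀ A : PStr ι, IsKleisli A A k (lastW A)) ∧
    -- h* is well defined and a morphism Hk(A,a) → Hk(B,b), and ε ∘ h* = h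
    (∀ (A B : PStr ι) (h : List A.W → B.W), IsKleisli A B k h →
      (∀ s, Valid A k s → Valid B k (ext A h s)) ∧
      ext A h [A.pt] = [B.pt] ∧
      (∀ s, Valid A k s → ∀ i, liftP A i s → liftP B i (ext A h s)) ∧
      (∀ s t, Valid A k s → Valid A k t → liftE A s t →
        liftE B (ext A h s) (ext A h t)) ∧
      (∀ s, Valid A k s → lastW B (ext A h s) = h s)) ∧
    -- ε* = id
    (∀ (A : PStr ι) (s : List A.W), Valid A k s → ext A (lastW A) s = s) ∧
    -- (g ∘ h*)* = g* ∘ h*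
    (∀ (A B C : PStr ι) (h : List A.W → B.W) (g : List B.W → C.W),
      IsKleisli A B k h → IsKleisli B C k g →
      ∀ s, Valid A k s → ext A (fun u => g (ext A h u)) s = ext B g (ext A h s)) := by
  refine ⟨fun A => isKleisli_lastW A k, fun A B h hh => ⟨?_, ?_, ?_, ?_, ?_⟩,
    fun A s _ => ext_lastW s, fun A B C h g _ _ s _ => ext_comp h g s⟩
  · exact fun s hs => hh.valid_ext hs
  · rw [ext_singleton, hh.1]
  · exact fun s hs i hp => hh.liftP_ext hs hp
  · exact fun s t hs ht hst => hh.liftE_ext hs ht hst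
  · exact fun s hs => lastW_ext h hs.ne_nil

/-- `(Hk, ε, (·)*)` is a comonad in Kleisli form on pointed σ-structures:
the counit ε is a morphism; for every coKleisli morphism `h : Hk(A,a) → (B,b)` the
extension `h* : Hk(A,a) → Hk(B,b)` is a well-defined homomorphism of pointed
structures; and ε ∘ h* = h, ε* = id, (g ∘ h*)* = g* ∘ h*. -/
theorem hybrid_comonad_in_kleisli_form (ι : Type) (k : ℕ) (hk : 0 < k) :
    -- ε is a coKleisli morphism Hk(A,a) → (A,a)
    (∀ A : PStr ι, IsKleisli A A k (lastW A)) ∧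
    -- h* is well defined and a morphism Hk(A,a) → Hk(B,b), and ε ∘ h* = h
    (∀ (A B : PStr ι) (h : List A.W → B.W), IsKleisli A B k h →
      (∀ s, Valid A k s → Valid B k (ext A h s)) ∧
      ext A h [A.pt] = [B.pt] ∧
      (∀ s, Valid A k s → ∀ i, liftP A i s → liftP B i (ext A h s)) ∧
      (∀ s t, Valid A k s → Valid A k t → liftE A s t →
        liftE B (ext A h s) (ext A h t)) ∧
      (∀ s, Valid A k s → lastW B (ext A h s) = h s)) ∧
    -- ε* = id
    (∀ (A : PStr ι) (s : List A.W), Valid A k s → ext A (lastW A) s = s) ∧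
    -- (g ∘ h*)* = g* ∘ h*
    (∀ (A B C : PStr ι) (h : List A.W → B.W) (g : List B.W → C.W),
      IsKleisli A B k h → IsKleisli B C k g →
      ∀ s, Valid A k s → ext A (fun u => g (ext A h u)) s = ext B g (ext A h s)) :=
  hybrid_comonad_in_kleisli_form_general ι k

end PStr
end

section
/- Every formula ψ in the bounded fragment of quantifier rank at most k is invariant under k-generated substructures: for all m-pointed structures (A,ā), (A,ā) ⊨ ψ iff Rk(A,ā) ⊨ ψ. -/
/-- A structure over a bounded vocabulary: relations `R` with arities `ar`,
binary transition relations indexed by `τ`, and `m` distinguished constants. -/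
structure BStr (R : Type) (ar : R → ℕ) (τ : Type) (m : ℕ) where
  W : Type
  rel : ∀ r : R, (Fin (ar r) → W) → Prop
  tr : τ → W → W → Prop
  c : Fin m → W

variable {R : Type} {ar : R → ℕ} {τ : Type} {m : ℕ}

/-- Terms: constants or variables. -/
abbrev Tm (m n : ℕ) : Type := Fin m ⊕ Fin n

/-- Evaluation of terms. -/
def tmEval (A : BStr R ar τ m) {n : ℕ} (v : Fin n → A.W) : Tm m n → A.W :=
  Sum.elim A.c v

/-- The bounded fragment: quantifiers are relativized to transition relations,
`∃x.(E(t,x) ∧ φ)` and `∀x.(E(t,x) → φ)` with `t` a term not equal to the bound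
variable (guaranteed here since `t` lives in the outer context). -/
inductive BFO (R : Type) (ar : R → ℕ) (τ : Type) (m : ℕ) : ℕ → Type
  | rel {n : ℕ} (r : R) (t : Fin (ar r) → Tm m n) : BFO R ar τ m n
  | tr {n : ℕ} (e : τ) (t u : Tm m n) : BFO R ar τ m n
  | eq {n : ℕ} (t u : Tm m n) : BFO R ar τ m n
  | not {n : ℕ} (φ : BFO R ar τ m n) : BFO R ar τ m n
  | and {n : ℕ} (φ ψ : BFO R ar τ m n) : BFO R ar τ m n
  | or {n : ℕ} (φ ψ : BFO R ar τ m n) : BFO R ar τ m n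
  | bex {n : ℕ} (e : τ) (t : Tm m n) (φ : BFO R ar τ m (n + 1)) : BFO R ar τ m n
  | ball {n : ℕ} (e : τ) (t : Tm m n) (φ : BFO R ar τ m (n + 1)) : BFO R ar τ m n

/-- Satisfaction for the bounded fragment. -/
def BFO.Sat (A : BStr R ar τ m) : ∀ {n : ℕ}, BFO R ar τ m n → (Fin n → A.W) → Prop
  | _, .rel r t, v => A.rel r fun i => tmEval A v (t i)
  | _, .tr e t u, v => A.tr e (tmEval A v t) (tmEval A v u)
  | _, .eq t u, v => tmEval A v t = tmEval A v u
  | _, .not φ, v => ¬ BFO.Sat A φ v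
  | _, .and φ ψ, v => BFO.Sat A φ v ∧ BFO.Sat A ψ v
  | _, .or φ ψ, v => BFO.Sat A φ v ∨ BFO.Sat A ψ v
  | _, .bex e t φ, v => ∃ w : A.W, A.tr e (tmEval A v t) w ∧ BFO.Sat A φ (Fin.snoc v w)
  | _, .ball e t φ, v => ∀ w : A.W, A.tr e (tmEval A v t) w → BFO.Sat A φ (Fin.snoc v w)

/-- Quantifier rank for the bounded fragment. -/
def BFO.qr : ∀ {n : ℕ}, BFO R ar τ m n → ℕ
  | _, .rel _ _ => 0
  | _, .tr _ _ _ => 0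
  | _, .eq _ _ => 0
  | _, .not φ => φ.qr
  | _, .and φ ψ => max φ.qr ψ.qr
  | _, .or φ ψ => max φ.qr ψ.qr
  | _, .bex _ _ φ => φ.qr + 1
  | _, .ball _ _ φ => φ.qr + 1

/-- Satisfaction of a bounded sentence. -/
def BFO.SatS (A : BStr R ar τ m) (φ : BFO R ar τ m 0) : Prop :=
  BFO.Sat A φ (fun i => i.elim0)

/-- Elements reachable from the constants in at most `k` steps along transition
relations. -/
def reachN (A : BStr R ar τ m) : ℕ → Set A.W
  | 0 => Set.range A.c
  | n + 1 => reachN A n ∪ {w | ∃ v ∈ reachN A n, ∃ e, A.tr e v w}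

theorem c_mem_reachN (A : BStr R ar τ m) (k : ℕ) (i : Fin m) :
    A.c i ∈ reachN A k := by
  induction k with
  | zero => exact ⟨i, rfl⟩
  | succ k ih => exact Or.inl ih

/-- The `k`-reachability comonad `Rk`: the induced substructure on the elements
reachable from the distinguished tuple in at most `k` transition steps. -/
def RkStr (A : BStr R ar τ m) (k : ℕ) : BStr R ar τ m where
  W := {w : A.W // w ∈ reachN A k}
  rel r t := A.rel r fun i => (t i).1
  tr e x y := A.tr e x.1 y.1
  c i := ⟨A.c i, c_mem_reachN A k i⟩

/-! A bounded quantifier only moves along one transition edge from a point that is already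
named, so a formula of quantifier rank `q` evaluated at points reachable in `j` steps only
visits points reachable in `j + q` steps. For a sentence of rank at most `k` all of them lie in
`R_k(A)`, and since atomic formulas are evaluated in `R_k(A)` as in `A`, the two structures agree
on it. -/

theorem reachN_monotone (A : BStr R ar τ m) : Monotone (reachN A) :=
  monotone_nat_of_le_succ fun _ => Set.subset_union_left

section reachN

variable {A : BStr R ar τ m} {j n : ℕ}

theorem mem_reachN_succ_of_tr {x y : A.W} {e : τ} (hx : x ∈ reachN A j)
    (hxy : A.tr e x y) : y ∈ reachN A (j + 1) :=
  Or.inr ⟨x, hx, e, hxy⟩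

theorem range_snoc_subset_reachN_succ {v : Fin n → A.W} (hv : Set.range v ⊆ reachN A j)
    {y : A.W} (hy : y ∈ reachN A (j + 1)) : Set.range (Fin.snoc v y) ⊆ reachN A (j + 1) := by
  rw [Fin.range_snoc]
  exact Set.insert_subset hy (hv.trans (reachN_monotone A j.le_succ))

theorem tmEval_mem_reachN {v : Fin n → A.W} (hv : Set.range v ⊆ reachN A j) (t : Tm m n) :
    tmEval A v t ∈ reachN A j := by
  cases t with
  | inl i => exact c_mem_reachN A j i
  | inr i => exact hv ⟨i, rfl⟩

end reachN

namespace RkStr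

variable {A : BStr R ar τ m} {k : ℕ}

-- `(RkStr A k).W` is a subtype only up to unfolding `RkStr`, so `Subtype.val ∘ v` is not
-- well typed at reducible transparency and cannot be rewritten with; `incl A k ∘ v` can.
variable (A k) in
def incl : (RkStr A k).W → A.W :=
  Subtype.val

theorem incl_injective : Function.Injective (incl A k) :=
  Subtype.val_injective

theorem rel_iff (r : R) (t : Fin (ar r) → (RkStr A k).W) :
    (RkStr A k).rel r t ↔ A.rel r fun i => incl A k (t i) :=
  Iff.rfl

theorem tr_iff (e : τ) (x y : (RkStr A k).W) :
    (RkStr A k).tr e x y ↔ A.tr e (incl A k x) (incl A k y) :=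
  Iff.rfl

theorem incl_tmEval {n : ℕ} (v : Fin n → (RkStr A k).W) (t : Tm m n) :
    incl A k (tmEval (RkStr A k) v t) = tmEval A (incl A k ∘ v) t := by
  cases t <;> rfl

theorem exists_tr_iff {j : ℕ} {x : A.W} (hx : x ∈ reachN A j) (hjk : j < k) (e : τ)
    (P : A.W → Prop) :
    (∃ y, A.tr e x y ∧ P y) ↔ ∃ y : (RkStr A k).W, A.tr e x (incl A k y) ∧ P (incl A k y) :=
  ⟨fun ⟨y, hxy, hy⟩ => ⟨⟨y, reachN_monotone A hjk (mem_reachN_succ_of_tr hx hxy)⟩, hxy, hy⟩,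
    fun ⟨y, hxy, hy⟩ => ⟨incl A k y, hxy, hy⟩⟩

theorem forall_tr_iff {j : ℕ} {x : A.W} (hx : x ∈ reachN A j) (hjk : j < k) (e : τ)
    (P : A.W → Prop) :
    (∀ y, A.tr e x y → P y) ↔ ∀ y : (RkStr A k).W, A.tr e x (incl A k y) → P (incl A k y) :=
  ⟨fun h y hxy => h (incl A k y) hxy,
    fun h y hxy => h ⟨y, reachN_monotone A hjk (mem_reachN_succ_of_tr hx hxy)⟩ hxy⟩

end RkStr

open RkStr

theorem BFO.sat_incl_comp_iff (A : BStr R ar τ m) (k : ℕ) {n : ℕ} (φ : BFO R ar τ m n)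
    {j : ℕ} (hj : j + φ.qr ≤ k) (v : Fin n → (RkStr A k).W)
    (hv : Set.range (incl A k ∘ v) ⊆ reachN A j) :
    BFO.Sat A φ (incl A k ∘ v) ↔ BFO.Sat (RkStr A k) φ v := by
  induction φ generalizing j with
  | rel r t => simp only [BFO.Sat, rel_iff, incl_tmEval]
  | tr e t u => simp only [BFO.Sat, tr_iff, incl_tmEval]
  | eq t u => simp only [BFO.Sat, ← incl_injective.eq_iff, incl_tmEval]
  | not φ ih => exact not_congr (ih hj v hv)
  | and φ ψ ihφ ihψ =>
    simp only [BFO.qr] at hj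
    exact and_congr (ihφ (by omega) v hv) (ihψ (by omega) v hv)
  | or φ ψ ihφ ihψ =>
    simp only [BFO.qr] at hj
    exact or_congr (ihφ (by omega) v hv) (ihψ (by omega) v hv)
  | bex e t φ ih =>
    simp only [BFO.qr] at hj
    have ht : tmEval A (incl A k ∘ v) t ∈ reachN A j := tmEval_mem_reachN hv t
    simp only [BFO.Sat, tr_iff, incl_tmEval]
    rw [exists_tr_iff ht (by omega : j < k)]
    refine exists_congr fun y => and_congr_right fun hy => ?_
    rw [← Fin.comp_snoc]
    refine ih (j := j + 1) (by omega) _ ?_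
    rw [Fin.comp_snoc]
    exact range_snoc_subset_reachN_succ hv (mem_reachN_succ_of_tr ht hy)
  | ball e t φ ih =>
    simp only [BFO.qr] at hj
    have ht : tmEval A (incl A k ∘ v) t ∈ reachN A j := tmEval_mem_reachN hv t
    simp only [BFO.Sat, tr_iff, incl_tmEval]
    rw [forall_tr_iff ht (by omega : j < k)]
    refine forall_congr' fun y => imp_congr_right fun hy => ?_
    rw [← Fin.comp_snoc]
    refine ih (j := j + 1) (by omega) _ ?_
    rw [Fin.comp_snoc]
    exact range_snoc_subset_reachN_succ hv (mem_reachN_succ_of_tr ht hy)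

/-- Every sentence `ψ` of the bounded fragment of quantifier rank at most `k` is
invariant under `k`-generated substructures: for all `m`-pointed structures
`(A,ā)`, `(A,ā) ⊨ ψ` iff `Rk(A,ā) ⊨ ψ`. -/
theorem bounded_fragment_invariant_under_generated_substructures
    (ψ : BFO R ar τ m 0) (k : ℕ) (hqr : ψ.qr ≤ k) :
    ∀ A : BStr R ar τ m, BFO.SatS A ψ ↔ BFO.SatS (RkStr A k) ψ := by
  intro A
  have h := BFO.sat_incl_comp_iff A k ψ (j := 0) (by omega) (fun i => i.elim0) (by simp)
  rwa [Subsingleton.elim (incl A k ∘ _) fun i => i.elim0] at h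
end

section
/- Workspace Lemma (metric version): Let M be a metric space valued in [0,∞], ā ∈ M^m, q > 0, ℓ = 2^q, N = B[ā;ℓ], P the disjoint sum of q copies of M and q copies of N (points in distinct summands at distance ∞), M' = M + P, N' = N + P. Then there is a length-q back-and-forth strategy between (M',ā) and (N',ā) satisfying the separation invariants: positions split into a 'copy-cat with the identity inside B[ā; ℓ − ℓ_k]' part and summand-wise isomorphism parts, with the two parts at distance > ℓ_k = 2^{q−k} after k rounds, and points in the isomorphism part within distance ℓ_k of each other lying under the same canonical summand isomorphism. -/
open ENNReal

/-- A metric on `X` valued in `[0,∞]`. -/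
structure EMet (X : Type) where
  d : X → X → ℝ≥0∞
  refl : ∀ x, d x x = 0
  symm : ∀ x y, d x y = d y x
  triangle : ∀ x y z, d x z ≤ d x y + d y z

/-- The ambient space containing both `M' = M + P` and `N' = N + P`, where
`P = q·M + q·N`: index `0` is the principal summand, indices `1,…,q` are the copies
of `M` and indices `q+1,…,2q` are the copies of `N` (carved out of copies of `M` by
the ball condition).  Distinct summands are at distance `∞`. -/
abbrev WS (q : ℕ) (M : Type) : Type := Fin (2 * q + 1) × M

/-- The sum metric: within a summand the metric of `M`, across summands `∞`. -/
noncomputable def dW {M : Type} (q : ℕ) (dM : EMet M) (x y : WS q M) : ℝ≥0∞ :=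
  if x.1 = y.1 then dM.d x.2 y.2 else ⊤

/-- The subset of the ambient space realizing `M' = M + q·M + q·N`. -/
def MSet {M : Type} (q m : ℕ) (dM : EMet M) (abar : Fin m → M) : Set (WS q M) :=
  {z | z.1.val ≤ q ∨ ∃ i, dM.d (abar i) z.2 ≤ 2 ^ q}

/-- The subset of the ambient space realizing `N' = N + q·M + q·N`,
where `N = B[ā; 2^q]`. -/
def NSet {M : Type} (q m : ℕ) (dM : EMet M) (abar : Fin m → M) : Set (WS q M) :=
  {z | (1 ≤ z.1.val ∧ z.1.val ≤ q) ∨ ∃ i, dM.d (abar i) z.2 ≤ 2 ^ q}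

/-!
Duplicator keeps every position split into a copy-cat part, lying in the principal summands
within `ℓ - ℓ_k` of `ā` (where `M` and `N = B[ā; ℓ]` coincide), and a part matched summand by
summand through canonical isomorphisms. A Spoiler move within `ℓ_{k+1}` of a matched point is
answered through the same isomorphism; one within `ℓ_{k+1}` of the copy-cat part is copied, and
stays inside `B[ā; ℓ - ℓ_{k+1}]`; any other move opens a fresh summand of the same type, which
exists because fewer than `q` summands of each type are in use. Since `ℓ_k = 2 ℓ_{k+1}`, the
triangle inequality keeps the two parts more than `ℓ_{k+1}` apart. The whole situation is
symmetric under exchanging `M'` and `N'`.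
-/

namespace WorkspaceLemma

variable {M : Type} {q : ℕ} (dM : EMet M)

section Distance

variable {dM} {x y z : WS q M}

lemma dW_of_fst_eq (h : x.1 = y.1) : dW q dM x y = dM.d x.2 y.2 := if_pos h

lemma dW_of_fst_ne (h : x.1 ≠ y.1) : dW q dM x y = ⊤ := if_neg h

lemma fst_eq_of_dW_le {c : ℝ≥0∞} (hc : c ≠ ⊤) (h : dW q dM x y ≤ c) : x.1 = y.1 := by
  by_contra hne
  exact hc (top_le_iff.mp (dW_of_fst_ne hne ▸ h))

lemma dW_comm (x y : WS q M) : dW q dM x y = dW q dM y x := by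
  by_cases h : x.1 = y.1
  · rw [dW_of_fst_eq h, dW_of_fst_eq h.symm, dM.symm]
  · rw [dW_of_fst_ne h, dW_of_fst_ne (Ne.symm h)]

lemma dW_triangle (x y z : WS q M) : dW q dM x z ≤ dW q dM x y + dW q dM y z := by
  by_cases hxy : x.1 = y.1
  · by_cases hyz : y.1 = z.1
    · rw [dW_of_fst_eq hxy, dW_of_fst_eq hyz, dW_of_fst_eq (hxy.trans hyz)]
      exact dM.triangle _ _ _
    · simp [dW_of_fst_ne hyz]
  · simp [dW_of_fst_ne hxy]

lemma dW_le_add_of_le {a b : ℝ≥0∞} (hxy : dW q dM x y ≤ a) (hyz : dW q dM y z ≤ b) :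
    dW q dM x z ≤ a + b :=
  (dW_triangle x y z).trans (add_le_add hxy hyz)

lemma lt_dW_of_add_lt {c : ℝ≥0∞} (hxz : c + c < dW q dM x z) (hyz : dW q dM y z ≤ c) :
    c < dW q dM x y :=
  lt_of_not_ge fun hxy => (dW_le_add_of_le hxy hyz).not_gt hxz

end Distance

lemma forall_fin_add_succ {m k : ℕ} {p : Fin (m + (k + 1)) → Prop} :
    (∀ i, p i) ↔ (∀ i : Fin (m + k), p i.castSucc) ∧ p (Fin.last (m + k)) :=
  Fin.forall_fin_succ'

lemma exists_fresh_in_block {k : ℕ} (hk : k < q) (g : Fin k → Fin (2 * q + 1)) {lo : ℕ}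
    (hlo : lo ≤ q) : ∃ c : Fin (2 * q + 1), lo < c.val ∧ c.val ≤ lo + q ∧ c ∉ Set.range g := by
  classical
  let block := Finset.Ioc (⟨lo, by omega⟩ : Fin (2 * q + 1)) ⟨lo + q, by omega⟩
  have hcard : (Finset.univ.image g).card < block.card := by
    rw [Fin.card_Ioc]
    exact (Finset.card_image_le.trans_eq (Finset.card_fin k)).trans_lt (by simpa using hk)
  obtain ⟨c, hc, hcg⟩ := Finset.exists_mem_notMem_of_card_lt_card hcard
  rw [Finset.mem_Ioc] at hc
  exact ⟨c, hc.1, hc.2, by simpa using hcg⟩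

lemma exists_fresh_summand {k : ℕ} (hk : k < q) (g : Fin k → Fin (2 * q + 1)) (b : Prop) :
    ∃ c : Fin (2 * q + 1), c ≠ 0 ∧ (c.val ≤ q ↔ b) ∧ c ∉ Set.range g := by
  by_cases hb : b
  · obtain ⟨c, hlo, hhi, hg⟩ := exists_fresh_in_block hk g (Nat.zero_le q)
    exact ⟨c, Fin.pos_iff_ne_zero.mp hlo, iff_of_true (by omega) hb, hg⟩
  · obtain ⟨c, hlo, -, hg⟩ := exists_fresh_in_block hk g le_rfl
    exact ⟨c, Fin.pos_iff_ne_zero.mp ((Nat.zero_le q).trans_lt hlo), iff_of_false (by omega) hb, hg⟩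

variable {m : ℕ} (abar : Fin m → M)

/-- `MSet` and `NSet` are the instances `P c ↔ c ≤ q` and `P c ↔ 1 ≤ c ≤ q`: `P` marks the
summands that are full copies of `M`. -/
def summandsOrBall (P : Fin (2 * q + 1) → Prop) : Set (WS q M) :=
  {z | P z.1 ∨ ∃ i, dM.d (abar i) z.2 ≤ 2 ^ q}

variable {dM abar} {P Q : Fin (2 * q + 1) → Prop}

lemma mem_summandsOrBall_of_dW_le {z : WS q M} {j : Fin m}
    (h : dW q dM (0, abar j) z ≤ 2 ^ q) : z ∈ summandsOrBall dM abar P :=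
  Or.inr ⟨j, by rwa [dW_of_fst_eq (fst_eq_of_dW_le (by simp) h)] at h⟩

lemma mem_summandsOrBall_of_iff {x y : WS q M} (hx : x ∈ summandsOrBall dM abar P)
    (hPQ : P x.1 ↔ Q y.1) (hxy : x.2 = y.2) : y ∈ summandsOrBall dM abar Q :=
  hx.imp hPQ.mp (hxy ▸ id)

variable (dM abar P Q)

/-- The invariant at scale `r = ℓ_k`: `f i = false` marks the copy-cat part `C₀/D₀`,
`f i = true` the part `C₁/D₁` matched by canonical summand isomorphisms. -/
structure Invariant (r : ℝ≥0∞) {k : ℕ} (s t : Fin (m + k) → WS q M) (f : Fin (m + k) → Bool) :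
    Prop where
  mem_left : ∀ i, s i ∈ summandsOrBall dM abar P
  mem_right : ∀ i, t i ∈ summandsOrBall dM abar Q
  copycat_of_lt : ∀ i : Fin (m + k), (i : ℕ) < m → f i = false
  copycat_ball : ∀ i, f i = false → ∃ j, dW q dM (0, abar j) (s i) ≤ 2 ^ q - r
  copycat_eq : ∀ i, f i = false → s i = t i
  sep_left : ∀ i j, f i = false → f j = true → r < dW q dM (s i) (s j)
  sep_right : ∀ i j, f i = false → f j = true → r < dW q dM (t i) (t j)
  type_iff : ∀ i, f i = true → (P (s i).1 ↔ Q (t i).1)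
  snd_eq : ∀ i, f i = true → (s i).2 = (t i).2
  fst_eq_of_near : ∀ i j, f i = true → f j = true →
    (dW q dM (s i) (s j) ≤ r ∨ dW q dM (t i) (t j) ≤ r) → (s i).1 = (s j).1 ∧ (t i).1 = (t j).1

variable {dM abar P Q} {r c : ℝ≥0∞} {k : ℕ} {s t : Fin (m + k) → WS q M} {f : Fin (m + k) → Bool}

lemma invariant_init :
    Invariant dM abar P Q r (k := 0) (fun i => (0, abar i)) (fun i => (0, abar i))
      (fun _ => false) where
  mem_left i := mem_summandsOrBall_of_dW_le (j := i) (by simp [dW, dM.refl])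
  mem_right i := mem_summandsOrBall_of_dW_le (j := i) (by simp [dW, dM.refl])
  copycat_of_lt _ _ := rfl
  copycat_ball i _ := ⟨i, by simp [dW, dM.refl]⟩
  copycat_eq _ _ := rfl
  sep_left _ _ _ h := by simp at h
  sep_right _ _ _ h := by simp at h
  type_iff _ h := by simp at h
  snd_eq _ h := by simp at h
  fst_eq_of_near _ _ h := by simp at h

namespace Invariant

lemma symm (h : Invariant dM abar P Q r s t f) : Invariant dM abar Q P r t s f where
  mem_left := h.mem_right
  mem_right := h.mem_left
  copycat_of_lt := h.copycat_of_lt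
  copycat_ball i hi := h.copycat_eq i hi ▸ h.copycat_ball i hi
  copycat_eq i hi := (h.copycat_eq i hi).symm
  sep_left := h.sep_right
  sep_right := h.sep_left
  type_iff i hi := (h.type_iff i hi).symm
  snd_eq i hi := (h.snd_eq i hi).symm
  fst_eq_of_near i j hi hj hd := (h.fst_eq_of_near i j hi hj hd.symm).symm

lemma mono (h : Invariant dM abar P Q r s t f) (hcr : c ≤ r) : Invariant dM abar P Q c s t f where
  mem_left := h.mem_left
  mem_right := h.mem_right
  copycat_of_lt := h.copycat_of_lt
  copycat_ball i hi := (h.copycat_ball i hi).imp fun _ hj => hj.trans (tsub_le_tsub_left hcr _)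
  copycat_eq := h.copycat_eq
  sep_left i j hi hj := hcr.trans_lt (h.sep_left i j hi hj)
  sep_right i j hi hj := hcr.trans_lt (h.sep_right i j hi hj)
  type_iff := h.type_iff
  snd_eq := h.snd_eq
  fst_eq_of_near i j hi hj hd := h.fst_eq_of_near i j hi hj (hd.imp (·.trans hcr) (·.trans hcr))

lemma fst_eq_zero_right (h : Invariant dM abar P Q r s t f) {i : Fin (m + k)} (hi : f i = false) :
    (t i).1 = 0 := by
  obtain ⟨j, hj⟩ := h.symm.copycat_ball i hi
  exact (fst_eq_of_dW_le (ne_top_of_le_ne_top (by simp) tsub_le_self) hj).symm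

variable {x y : WS q M}

/- The ascriptions `Fin (m + k + 1)` make `Fin.snoc` elaborate at length `m + k` rather than
`Nat.add m k`, which `Fin.snoc_last` would not match. -/
lemma snoc_copycat (h : Invariant dM abar P Q c s t f)
    (hx : ∃ j, dW q dM (0, abar j) x ≤ 2 ^ q - c)
    (hsep : ∀ v, f v = true → c < dW q dM x (s v) ∧ c < dW q dM x (t v)) :
    Invariant dM abar P Q c (k := k + 1) (Fin.snoc s x : Fin (m + k + 1) → _)
      (Fin.snoc t x : Fin (m + k + 1) → _) (Fin.snoc f false : Fin (m + k + 1) → _) := by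
  obtain ⟨j, hj⟩ := hx
  have hxN : dW q dM (0, abar j) x ≤ 2 ^ q := hj.trans tsub_le_self
  constructor <;>
    simp only [forall_fin_add_succ, Fin.snoc_castSucc, Fin.snoc_last, Fin.val_castSucc,
      Bool.false_eq_true, false_implies, implies_true, and_true, true_implies,
      Fin.val_last]
  · exact ⟨h.mem_left, mem_summandsOrBall_of_dW_le hxN⟩
  · exact ⟨h.mem_right, mem_summandsOrBall_of_dW_le hxN⟩
  · exact h.copycat_of_lt
  · exact ⟨h.copycat_ball, j, hj⟩
  · exact h.copycat_eq
  · exact ⟨h.sep_left, fun v hv => (hsep v hv).1⟩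
  · exact ⟨h.sep_right, fun v hv => (hsep v hv).2⟩
  · exact h.type_iff
  · exact h.snd_eq
  · exact h.fst_eq_of_near

lemma snoc_matched (h : Invariant dM abar P Q c s t f) (hx : x ∈ summandsOrBall dM abar P)
    (htype : P x.1 ↔ Q y.1) (hsnd : x.2 = y.2)
    (hsep : ∀ i, f i = false → c < dW q dM (s i) x ∧ c < dW q dM (t i) y)
    (hnear : ∀ v, f v = true → (dW q dM x (s v) ≤ c ∨ dW q dM y (t v) ≤ c) →
      x.1 = (s v).1 ∧ y.1 = (t v).1) :
    Invariant dM abar P Q c (k := k + 1) (Fin.snoc s x : Fin (m + k + 1) → _)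
      (Fin.snoc t y : Fin (m + k + 1) → _) (Fin.snoc f true : Fin (m + k + 1) → _) := by
  constructor <;>
    simp only [forall_fin_add_succ, Fin.snoc_castSucc, Fin.snoc_last, Fin.val_castSucc,
      Fin.val_last, Bool.true_eq_false, false_implies, implies_true, and_true, true_implies]
  · exact ⟨h.mem_left, hx⟩
  · exact ⟨h.mem_right, mem_summandsOrBall_of_iff hx htype hsnd⟩
  · exact ⟨h.copycat_of_lt, fun hlt => by omega⟩
  · exact h.copycat_ball
  · exact h.copycat_eq
  · exact fun i => ⟨h.sep_left i, (hsep i · |>.1)⟩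
  · exact fun i => ⟨h.sep_right i, (hsep i · |>.2)⟩
  · exact ⟨h.type_iff, htype⟩
  · exact ⟨h.snd_eq, hsnd⟩
  · refine ⟨fun i => ⟨h.fst_eq_of_near i, fun hi hd => ?_⟩, hnear⟩
    rw [dW_comm (s i), dW_comm (t i)] at hd
    exact (hnear i hi hd).imp Eq.symm Eq.symm

lemma snoc_near_matched (h : Invariant dM abar P Q (c + c) s t f) (hc : c ≠ ⊤)
    (hx : x ∈ summandsOrBall dM abar P) {u : Fin (m + k)} (hu : f u = true)
    (hxu : dW q dM x (s u) ≤ c) :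
    Invariant dM abar P Q c (k := k + 1) (Fin.snoc s x : Fin (m + k + 1) → _)
      (Fin.snoc t ((t u).1, x.2) : Fin (m + k + 1) → _)
      (Fin.snoc f true : Fin (m + k + 1) → _) := by
  have hxu₁ : x.1 = (s u).1 := fst_eq_of_dW_le hc hxu
  have hyu : dW q dM ((t u).1, x.2) (t u) ≤ c := by
    rwa [dW_of_fst_eq (x := ((t u).1, x.2)) (y := t u) rfl, ← h.snd_eq u hu, ← dW_of_fst_eq hxu₁]
  refine (h.mono le_self_add).snoc_matched hx (hxu₁ ▸ h.type_iff u hu) rfl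
    (fun i hi => ⟨lt_dW_of_add_lt (h.sep_left i u hi hu) hxu,
      lt_dW_of_add_lt (h.sep_right i u hi hu) hyu⟩) fun v hv hd => ?_
  rcases hd with hd | hd
  · have huv := h.fst_eq_of_near u v hu hv (Or.inl (dW_le_add_of_le (dW_comm x _ ▸ hxu) hd))
    exact ⟨fst_eq_of_dW_le hc hd, huv.2⟩
  · have huv := h.fst_eq_of_near u v hu hv (Or.inr (dW_le_add_of_le (dW_comm _ (t u) ▸ hyu) hd))
    exact ⟨hxu₁.trans huv.1, fst_eq_of_dW_le hc hd⟩

lemma snoc_near_copycat (h : Invariant dM abar P Q (c + c) s t f) (hc : c ≠ ⊤)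
    (hcq : c + c ≤ 2 ^ q) {u : Fin (m + k)} (hu : f u = false) (hxu : dW q dM x (s u) ≤ c)
    (hfar : ∀ v, f v = true → c < dW q dM x (s v)) :
    Invariant dM abar P Q c (k := k + 1) (Fin.snoc s x : Fin (m + k + 1) → _)
      (Fin.snoc t x : Fin (m + k + 1) → _) (Fin.snoc f false : Fin (m + k + 1) → _) := by
  obtain ⟨j, hj⟩ := h.copycat_ball u hu
  refine (h.mono le_self_add).snoc_copycat ⟨j, ?_⟩ fun v hv => ⟨hfar v hv, ?_⟩
  · calc dW q dM (0, abar j) x ≤ 2 ^ q - (c + c) + c := dW_le_add_of_le hj (dW_comm x _ ▸ hxu)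
      _ = 2 ^ q - c := by
        rw [← tsub_tsub, tsub_add_cancel_of_le (ENNReal.le_sub_of_add_le_left hc hcq)]
  · rw [dW_comm]
    exact lt_dW_of_add_lt (dW_comm (t u) _ ▸ h.sep_right u v hu hv) (h.copycat_eq u hu ▸ hxu)

lemma exists_snoc_far (h : Invariant dM abar P Q (c + c) s t f)
    (hQ : ∀ a ≠ 0, Q a ↔ a.val ≤ q) (hk : k < q) (hc : c ≠ ⊤)
    (hx : x ∈ summandsOrBall dM abar P) (hfar : ∀ v, c < dW q dM x (s v)) :
    ∃ y, Invariant dM abar P Q c (k := k + 1) (Fin.snoc s x : Fin (m + k + 1) → _)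
      (Fin.snoc t y : Fin (m + k + 1) → _) (Fin.snoc f true : Fin (m + k + 1) → _) := by
  obtain ⟨a, ha₀, haP, hfresh⟩ :=
    exists_fresh_summand hk (fun j => (t (Fin.natAdd m j)).1) (P x.1)
  refine ⟨(a, x.2), (h.mono le_self_add).snoc_matched hx ((hQ a ha₀).trans haP).symm rfl
    (fun i hi => ⟨dW_comm x _ ▸ hfar i, ?_⟩) fun v hv hd => ?_⟩
  · rw [dW_of_fst_ne (by rw [h.fst_eq_zero_right hi]; exact ha₀.symm)]
    exact hc.lt_top
  · refine hd.elim (fun hd => absurd hd (hfar v).not_ge) fun hd => ?_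
    induction v using Fin.addCases with
    | left v => exact absurd (h.copycat_of_lt (Fin.castAdd k v) v.isLt ▸ hv) Bool.false_ne_true
    | right j => exact absurd ⟨j, (fst_eq_of_dW_le hc hd).symm⟩ hfresh

lemma exists_extend_left (h : Invariant dM abar P Q (c + c) s t f)
    (hQ : ∀ a ≠ 0, Q a ↔ a.val ≤ q) (hk : k < q) (hc : c ≠ ⊤) (hcq : c + c ≤ 2 ^ q)
    (hx : x ∈ summandsOrBall dM abar P) :
    ∃ y ∈ summandsOrBall dM abar Q, ∃ f', Invariant dM abar P Q c (k := k + 1)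
      (Fin.snoc s x : Fin (m + k + 1) → _) (Fin.snoc t y : Fin (m + k + 1) → _) f' := by
  suffices ∃ y f', Invariant dM abar P Q c (k := k + 1) (Fin.snoc s x : Fin (m + k + 1) → _)
      (Fin.snoc t y : Fin (m + k + 1) → _) f' by
    obtain ⟨y, f', h'⟩ := this
    exact ⟨y, by simpa only [Fin.snoc_last] using h'.mem_right (Fin.last (m + k)), f', h'⟩
  by_cases hA : ∃ u, f u = true ∧ dW q dM x (s u) ≤ c
  · obtain ⟨u, hu, hxu⟩ := hA
    exact ⟨_, _, h.snoc_near_matched hc hx hu hxu⟩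
  push Not at hA
  by_cases hB : ∃ u, f u = false ∧ dW q dM x (s u) ≤ c
  · obtain ⟨u, hu, hxu⟩ := hB
    exact ⟨_, _, h.snoc_near_copycat hc hcq hu hxu hA⟩
  push Not at hB
  have hfar v : c < dW q dM x (s v) := by
    cases hv : f v
    exacts [hB v hv, hA v hv]
  obtain ⟨y, hy⟩ := h.exists_snoc_far hQ hk hc hx hfar
  exact ⟨y, _, hy⟩

lemma exists_extend_right (h : Invariant dM abar P Q (c + c) s t f)
    (hP : ∀ a ≠ 0, P a ↔ a.val ≤ q) (hk : k < q) (hc : c ≠ ⊤) (hcq : c + c ≤ 2 ^ q)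
    (hy : y ∈ summandsOrBall dM abar Q) :
    ∃ x ∈ summandsOrBall dM abar P, ∃ f', Invariant dM abar P Q c (k := k + 1)
      (Fin.snoc s x : Fin (m + k + 1) → _) (Fin.snoc t y : Fin (m + k + 1) → _) f' := by
  obtain ⟨x, hx, f', h'⟩ := h.symm.exists_extend_left hP hk hc hcq hy
  exact ⟨x, hx, f', h'.symm⟩

end Invariant

lemma two_pow_sub_eq_add (hk : k < q) :
    (2 : ℝ≥0∞) ^ (q - k) = 2 ^ (q - (k + 1)) + 2 ^ (q - (k + 1)) := by
  rw [← two_mul, ← pow_succ']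
  congr 1
  omega

end WorkspaceLemma

theorem workspace_lemma_metric_general (M : Type) (dM : EMet M) (m q : ℕ) (abar : Fin m → M) :
    ∃ S : ∀ k : ℕ, (Fin (m + k) → WS q M) → (Fin (m + k) → WS q M) → Prop,
      -- the initial position consists of the parameters in the principal summands
      S 0 (fun i => ((0 : Fin (2 * q + 1)), abar i))
        (fun i => ((0 : Fin (2 * q + 1)), abar i)) ∧
      -- positions lie in M' on the left and in N' on the right
      (∀ k s t, S k s t → ∀ i, s i ∈ MSet q m dM abar ∧ t i ∈ NSet q m dM abar) ∧
      -- the strategy is closed under Spoiler moves on either side, for q rounds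
      (∀ k s t, S k s t → k < q →
        (∀ x ∈ MSet q m dM abar, ∃ y ∈ NSet q m dM abar,
          S (k + 1) (Fin.snoc s x) (Fin.snoc t y)) ∧
        (∀ y ∈ NSet q m dM abar, ∃ x ∈ MSet q m dM abar,
          S (k + 1) (Fin.snoc s x) (Fin.snoc t y))) ∧
      -- the separation invariants
      (∀ k s t, S k s t → k ≤ q → ∃ f : Fin (m + k) → Bool,
        -- the parameters belong to the copy-cat part
        (∀ i : Fin (m + k), (i : ℕ) < m → f i = false) ∧
        -- the copy-cat part lies in B[ā; ℓ - ℓ_k] on both sides, and s and t agree on it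
        (∀ i : Fin (m + k), f i = false →
          (∃ j, dW q dM ((0 : Fin (2 * q + 1)), abar j) (s i) ≤ 2 ^ q - 2 ^ (q - k)) ∧
          (∃ j, dW q dM ((0 : Fin (2 * q + 1)), abar j) (t i) ≤ 2 ^ q - 2 ^ (q - k)) ∧
          s i = t i) ∧
        -- the two parts are at distance > ℓ_k on both sides
        (∀ i j : Fin (m + k), f i = false → f j = true →
          (2 : ℝ≥0∞) ^ (q - k) < dW q dM (s i) (s j) ∧
          (2 : ℝ≥0∞) ^ (q - k) < dW q dM (t i) (t j)) ∧
        -- matched points lie in summands of the same type, under the canonical iso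
        (∀ i : Fin (m + k), m ≤ (i : ℕ) → f i = true →
          (((s i).1.val ≤ q) ↔ (1 ≤ (t i).1.val ∧ (t i).1.val ≤ q)) ∧
          (s i).2 = (t i).2) ∧
        -- nearby matched points lie under the same canonical iso
        (∀ i j : Fin (m + k), m ≤ (i : ℕ) → m ≤ (j : ℕ) → f i = true → f j = true →
          (dW q dM (s i) (s j) ≤ (2 : ℝ≥0∞) ^ (q - k) ∨
            dW q dM (t i) (t j) ≤ (2 : ℝ≥0∞) ^ (q - k)) →
          ((s i).1 = (s j).1 ∧ (t i).1 = (t j).1))) := by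
  refine ⟨fun k s t => ∃ f, WorkspaceLemma.Invariant dM abar (fun a => a.val ≤ q)
      (fun a => 1 ≤ a.val ∧ a.val ≤ q) (2 ^ (q - k)) s t f, ⟨_, WorkspaceLemma.invariant_init⟩,
    fun k s t ⟨f, h⟩ i => ⟨h.mem_left i, h.mem_right i⟩, fun k s t ⟨f, h⟩ hk => ?_,
    fun k s t ⟨f, h⟩ _ => ?_⟩
  · have hc : (2 : ℝ≥0∞) ^ (q - (k + 1)) ≠ ⊤ := by simp
    have hcq : (2 : ℝ≥0∞) ^ (q - (k + 1)) + 2 ^ (q - (k + 1)) ≤ 2 ^ q :=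
      WorkspaceLemma.two_pow_sub_eq_add hk ▸ pow_le_pow_right₀ one_le_two (Nat.sub_le q k)
    rw [WorkspaceLemma.two_pow_sub_eq_add hk] at h
    have hNfull (a : Fin (2 * q + 1)) (ha : a ≠ 0) : 1 ≤ a.val ∧ a.val ≤ q ↔ a.val ≤ q :=
      and_iff_right (Nat.one_le_iff_ne_zero.mpr (Fin.val_ne_of_ne ha))
    exact ⟨fun _ hx => h.exists_extend_left hNfull hk hc hcq hx,
      fun _ hy => h.exists_extend_right (fun _ _ => Iff.rfl) hk hc hcq hy⟩
  · exact ⟨f, h.copycat_of_lt, fun i hi => ⟨h.copycat_ball i hi, h.symm.copycat_ball i hi,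
      h.copycat_eq i hi⟩, fun i j hi hj => ⟨h.sep_left i j hi hj, h.sep_right i j hi hj⟩,
      fun i _ hi => ⟨h.type_iff i hi, h.snd_eq i hi⟩, fun i j _ _ => h.fst_eq_of_near i j⟩

/-- Workspace Lemma (metric version).  With `ℓ = 2^q`, `ℓ_k = 2^(q-k)`,
`N = B[ā;ℓ]`, `P = q·M + q·N`, `M' = M + P`, `N' = N + P`, there is a length-`q`
back-and-forth strategy `S` between `(M',ā)` and `(N',ā)` such that every position
reached after `k` rounds splits, via a bipartition (encoded by `f`, with `false`
the `C₀/D₀`-part and `true` the `C₁/D₁`-part), into a copy-cat part lying inside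
`B[ā; ℓ - ℓ_k]` on which the two sequences literally agree, and a part matched by
canonical isomorphisms between summands of the same type (copies of `M`
with copies of `M`, copies of `N` with copies of `N`; the canonical isomorphisms
preserve the underlying point of `M`); the two parts are at distance `> ℓ_k`, and
points of the matched part within distance `ℓ_k` of each other (on either side)
lie under the same canonical summand isomorphism. -/
theorem workspace_lemma_metric (M : Type) (dM : EMet M) (m q : ℕ) (hq : 0 < q)
    (abar : Fin m → M) :
    ∃ S : ∀ k : ℕ, (Fin (m + k) → WS q M) → (Fin (m + k) → WS q M) → Prop,
      -- the initial position consists of the parameters in the principal summands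
      S 0 (fun i => ((0 : Fin (2 * q + 1)), abar i))
        (fun i => ((0 : Fin (2 * q + 1)), abar i)) ∧
      -- positions lie in M' on the left and in N' on the right
      (∀ k s t, S k s t → ∀ i, s i ∈ MSet q m dM abar ∧ t i ∈ NSet q m dM abar) ∧
      -- the strategy is closed under Spoiler moves on either side, for q rounds
      (∀ k s t, S k s t → k < q →
        (∀ x ∈ MSet q m dM abar, ∃ y ∈ NSet q m dM abar,
          S (k + 1) (Fin.snoc s x) (Fin.snoc t y)) ∧
        (∀ y ∈ NSet q m dM abar, ∃ x ∈ MSet q m dM abar,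
          S (k + 1) (Fin.snoc s x) (Fin.snoc t y))) ∧
      -- the separation invariants
      (∀ k s t, S k s t → k ≤ q → ∃ f : Fin (m + k) → Bool,
        -- the parameters belong to the copy-cat part
        (∀ i : Fin (m + k), (i : ℕ) < m → f i = false) ∧
        -- the copy-cat part lies in B[ā; ℓ - ℓ_k] on both sides, and s and t agree on it
        (∀ i : Fin (m + k), f i = false →
          (∃ j, dW q dM ((0 : Fin (2 * q + 1)), abar j) (s i) ≤ 2 ^ q - 2 ^ (q - k)) ∧
          (∃ j, dW q dM ((0 : Fin (2 * q + 1)), abar j) (t i) ≤ 2 ^ q - 2 ^ (q - k)) ∧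
          s i = t i) ∧
        -- the two parts are at distance > ℓ_k on both sides
        (∀ i j : Fin (m + k), f i = false → f j = true →
          (2 : ℝ≥0∞) ^ (q - k) < dW q dM (s i) (s j) ∧
          (2 : ℝ≥0∞) ^ (q - k) < dW q dM (t i) (t j)) ∧
        -- matched points lie in summands of the same type, under the canonical iso
        (∀ i : Fin (m + k), m ≤ (i : ℕ) → f i = true →
          (((s i).1.val ≤ q) ↔ (1 ≤ (t i).1.val ∧ (t i).1.val ≤ q)) ∧
          (s i).2 = (t i).2) ∧
        -- nearby matched points lie under the same canonical iso
        (∀ i j : Fin (m + k), m ≤ (i : ℕ) → m ≤ (j : ℕ) → f i = true → f j = true →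
          (dW q dM (s i) (s j) ≤ (2 : ℝ≥0∞) ^ (q - k) ∨
            dW q dM (t i) (t j) ≤ (2 : ℝ≥0∞) ^ (q - k)) →
          ((s i).1 = (s j).1 ∧ (t i).1 = (t j).1))) :=
  workspace_lemma_metric_general M dM m q abar
end

section
/- For all k, q > 0: if Duplicator has a winning strategy in the kq-round bounded back-and-forth game between Rk(A,ā) and Rk(B,b̄), then Rk(A,ā) ≡_q Rk(B,b̄) (they agree on all first-order sentences of quantifier rank ≤ q). -/
variable {R : Type} {ar : R → ℕ} {τ : Type} {m : ℕ}

/-- First-order formulas over the vocabulary, with `n` free variables. -/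
inductive FO (R : Type) (ar : R → ℕ) (τ : Type) (m : ℕ) : ℕ → Type
  | rel {n : ℕ} (r : R) (t : Fin (ar r) → Tm m n) : FO R ar τ m n
  | tr {n : ℕ} (e : τ) (t u : Tm m n) : FO R ar τ m n
  | eq {n : ℕ} (t u : Tm m n) : FO R ar τ m n
  | not {n : ℕ} (φ : FO R ar τ m n) : FO R ar τ m n
  | and {n : ℕ} (φ ψ : FO R ar τ m n) : FO R ar τ m n
  | or {n : ℕ} (φ ψ : FO R ar τ m n) : FO R ar τ m n
  | ex {n : ℕ} (φ : FO R ar τ m (n + 1)) : FO R ar τ m n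
  | all {n : ℕ} (φ : FO R ar τ m (n + 1)) : FO R ar τ m n

/-- Tarskian satisfaction. -/
def FO.Sat (A : BStr R ar τ m) : ∀ {n : ℕ}, FO R ar τ m n → (Fin n → A.W) → Prop
  | _, .rel r t, v => A.rel r fun i => tmEval A v (t i)
  | _, .tr e t u, v => A.tr e (tmEval A v t) (tmEval A v u)
  | _, .eq t u, v => tmEval A v t = tmEval A v u
  | _, .not φ, v => ¬ FO.Sat A φ v
  | _, .and φ ψ, v => FO.Sat A φ v ∧ FO.Sat A ψ v
  | _, .or φ ψ, v => FO.Sat A φ v ∨ FO.Sat A ψ v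
  | _, .ex φ, v => ∃ w : A.W, FO.Sat A φ (Fin.snoc v w)
  | _, .all φ, v => ∀ w : A.W, FO.Sat A φ (Fin.snoc v w)

/-- Quantifier rank. -/
def FO.qr : ∀ {n : ℕ}, FO R ar τ m n → ℕ
  | _, .rel _ _ => 0
  | _, .tr _ _ _ => 0
  | _, .eq _ _ => 0
  | _, .not φ => φ.qr
  | _, .and φ ψ => max φ.qr ψ.qr
  | _, .or φ ψ => max φ.qr ψ.qr
  | _, .ex φ => φ.qr + 1
  | _, .all φ => φ.qr + 1

/-- Satisfaction of a sentence. -/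
def FO.SatS (A : BStr R ar τ m) (φ : FO R ar τ m 0) : Prop :=
  FO.Sat A φ (fun i => i.elim0)

/-- The elements of `A` named at a position: the constants together with the
elements played so far. -/
def posE (A : BStr R ar τ m) {n : ℕ} (s : Fin n → A.W) : Tm m n → A.W :=
  Sum.elim A.c s

/-- The position `(s,t)` (together with the constants) is a partial isomorphism. -/
def PIso (A B : BStr R ar τ m) {n : ℕ} (s : Fin n → A.W) (t : Fin n → B.W) : Prop :=
  (∀ x y : Tm m n, posE A s x = posE A s y ↔ posE B t x = posE B t y) ∧
  (∀ (r : R) (v : Fin (ar r) → Tm m n),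
    ((A.rel r fun i => posE A s (v i)) ↔ (B.rel r fun i => posE B t (v i)))) ∧
  (∀ (e : τ) (x y : Tm m n),
    A.tr e (posE A s x) (posE A s y) ↔ B.tr e (posE B t x) (posE B t y))

/-- A move is legal in the bounded game if it is seen, via some transition
relation, from a constant or a previously played element. -/
def legal (A : BStr R ar τ m) {n : ℕ} (s : Fin n → A.W) (a : A.W) : Prop :=
  ∃ e, ∃ x : Tm m n, A.tr e (posE A s x) a

/-- Duplicator has a winning strategy in the `rounds`-round bounded back-and-forth
game between `(A,ā)` and `(B,b̄)` (on top of the initial rounds matching the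
distinguished tuples): a set of positions containing the initial position, all of
whose positions are partial isomorphisms, closed under legal Spoiler moves on
either side. -/
def BWin (A B : BStr R ar τ m) (rounds : ℕ) : Prop :=
  ∃ S : ∀ n : ℕ, (Fin n → A.W) → (Fin n → B.W) → Prop,
    S 0 (fun i => i.elim0) (fun i => i.elim0) ∧
    (∀ n s t, S n s t → PIso A B s t) ∧
    (∀ n s t, S n s t → n < rounds →
      (∀ a, legal A s a → ∃ b, legal B t b ∧ S (n + 1) (Fin.snoc s a) (Fin.snoc t b)) ∧
      (∀ b, legal B t b → ∃ a, legal A s a ∧ S (n + 1) (Fin.snoc s a) (Fin.snoc t b)))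


/-! ### Auxiliary machinery for the proof -/

/-- A chain of exactly `l` transition steps from a constant to `w`. -/
def BChain (C : BStr R ar τ m) : ℕ → C.W → Prop
  | 0, w => ∃ i, C.c i = w
  | l + 1, w => ∃ v, BChain C l v ∧ ∃ e, C.tr e v w

lemma reachN_mono (A : BStr R ar τ m) : ∀ {n k : ℕ}, n ≤ k → reachN A n ⊆ reachN A k := by
  intro n k h
  induction h with
  | refl => exact fun _ h => h
  | step _ ih => exact fun w hw => Or.inl (ih hw)

lemma chain_of_mem (A : BStr R ar τ m) (k : ℕ) :
    ∀ n, n ≤ k → ∀ w, w ∈ reachN A n → ∀ (h : w ∈ reachN A k),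
      ∃ l ≤ n, BChain (RkStr A k) l ⟨w, h⟩ := by
  intro n
  induction n with
  | zero =>
    rintro _ w ⟨i, rfl⟩ h
    exact ⟨0, le_refl 0, ⟨i, Subtype.ext rfl⟩⟩
  | succ n ih =>
    rintro hn w hw h
    rcases hw with hw | ⟨v, hv, e, hvw⟩
    · rcases ih (Nat.le_of_succ_le hn) w hw h with ⟨l, hl, hc⟩
      exact ⟨l, Nat.le_succ_of_le hl, hc⟩
    · have hvk : v ∈ reachN A k := reachN_mono A (Nat.le_of_succ_le hn) hv
      rcases ih (Nat.le_of_succ_le hn) v hv hvk with ⟨l, hl, hc⟩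
      exact ⟨l + 1, Nat.succ_le_succ hl, ⟨⟨v, hvk⟩, hc, e, hvw⟩⟩

lemma all_chain (A : BStr R ar τ m) (k : ℕ) :
    ∀ w : (RkStr A k).W, ∃ l ≤ k, BChain (RkStr A k) l w := fun ⟨w, hw⟩ =>
  chain_of_mem A k k le_rfl w hw hw

lemma tmEval_posE (C : BStr R ar τ m) {n j : ℕ} (s : Fin j → C.W) (f : Fin n → Tm m j)
    (y : Tm m n) :
    tmEval C (fun i => posE C s (f i)) y = posE C s (Sum.elim Sum.inl f y) := by
  cases y <;> rfl

lemma posE_map (C : BStr R ar τ m) {j l : ℕ} (s' : Fin (j + l) → C.W) (s : Fin j → C.W)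
    (hres : ∀ i, s' (Fin.castAdd l i) = s i) : ∀ y : Tm m j,
    posE C s' (Sum.map id (Fin.castAdd l) y) = posE C s y
  | .inl _ => rfl
  | .inr i => hres i

/-- Extension lemma, Spoiler playing in `C`: a chain target in `C` can be named
after at most `l` further rounds of the bounded game. -/
lemma extendC (C D : BStr R ar τ m) (rounds : ℕ)
    (S : ∀ n, (Fin n → C.W) → (Fin n → D.W) → Prop)
    (hmv : ∀ n s t, S n s t → n < rounds →
      (∀ a, legal C s a → ∃ b, legal D t b ∧ S (n + 1) (Fin.snoc s a) (Fin.snoc t b)) ∧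
      (∀ b, legal D t b → ∃ a, legal C s a ∧ S (n + 1) (Fin.snoc s a) (Fin.snoc t b))) :
    ∀ l a, BChain C l a → ∀ j (s : Fin j → C.W) (t : Fin j → D.W),
      S j s t → j + l ≤ rounds →
      ∃ (s' : Fin (j + l) → C.W) (t' : Fin (j + l) → D.W),
        S (j + l) s' t' ∧ (∀ i : Fin j, s' (Fin.castAdd l i) = s i) ∧
        (∀ i : Fin j, t' (Fin.castAdd l i) = t i) ∧
        ∃ x : Tm m (j + l), posE C s' x = a := by
  intro l
  induction l with
  | zero =>
    rintro a ⟨i, rfl⟩ j s t hst _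
    exact ⟨s, t, hst, fun i => congrArg s (Fin.ext rfl), fun i => congrArg t (Fin.ext rfl),
      Sum.inl i, rfl⟩
  | succ l ih =>
    rintro a ⟨v, hv, e, hvw⟩ j s t hst hle
    obtain ⟨s', t', hst', hres, htres, x, hx⟩ := ih v hv j s t hst (by omega)
    obtain ⟨b, -, hS2⟩ := (hmv _ _ _ hst' (by omega)).1 a ⟨e, x, by rw [hx]; exact hvw⟩
    refine ⟨Fin.snoc s' a, Fin.snoc t' b, hS2, ?_, ?_, Sum.inr (Fin.last _), by simp [posE]⟩
    · intro i
      have hcast : (Fin.castAdd (l + 1) i) = Fin.castSucc (Fin.castAdd l i) := Fin.ext rfl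
      rw [hcast, Fin.snoc_castSucc]; exact hres i
    · intro i
      have hcast : (Fin.castAdd (l + 1) i) = Fin.castSucc (Fin.castAdd l i) := Fin.ext rfl
      rw [hcast, Fin.snoc_castSucc]; exact htres i

/-- Extension lemma, Spoiler playing in `D`. -/
lemma extendD (C D : BStr R ar τ m) (rounds : ℕ)
    (S : ∀ n, (Fin n → C.W) → (Fin n → D.W) → Prop)
    (hmv : ∀ n s t, S n s t → n < rounds →
      (∀ a, legal C s a → ∃ b, legal D t b ∧ S (n + 1) (Fin.snoc s a) (Fin.snoc t b)) ∧
      (∀ b, legal D t b → ∃ a, legal C s a ∧ S (n + 1) (Fin.snoc s a) (Fin.snoc t b))) :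
    ∀ l b, BChain D l b → ∀ j (s : Fin j → C.W) (t : Fin j → D.W),
      S j s t → j + l ≤ rounds →
      ∃ (s' : Fin (j + l) → C.W) (t' : Fin (j + l) → D.W),
        S (j + l) s' t' ∧ (∀ i : Fin j, s' (Fin.castAdd l i) = s i) ∧
        (∀ i : Fin j, t' (Fin.castAdd l i) = t i) ∧
        ∃ x : Tm m (j + l), posE D t' x = b := by
  intro l
  induction l with
  | zero =>
    rintro b ⟨i, rfl⟩ j s t hst _
    exact ⟨s, t, hst, fun i => congrArg s (Fin.ext rfl), fun i => congrArg t (Fin.ext rfl),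
      Sum.inl i, rfl⟩
  | succ l ih =>
    rintro b ⟨v, hv, e, hvw⟩ j s t hst hle
    obtain ⟨s', t', hst', hres, htres, x, hx⟩ := ih v hv j s t hst (by omega)
    obtain ⟨a, -, hS2⟩ := (hmv _ _ _ hst' (by omega)).2 b ⟨e, x, by rw [hx]; exact hvw⟩
    refine ⟨Fin.snoc s' a, Fin.snoc t' b, hS2, ?_, ?_, Sum.inr (Fin.last _), by simp [posE]⟩
    · intro i
      have hcast : (Fin.castAdd (l + 1) i) = Fin.castSucc (Fin.castAdd l i) := Fin.ext rfl
      rw [hcast, Fin.snoc_castSucc]; exact hres i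
    · intro i
      have hcast : (Fin.castAdd (l + 1) i) = Fin.castSucc (Fin.castAdd l i) := Fin.ext rfl
      rw [hcast, Fin.snoc_castSucc]; exact htres i

/-- One quantifier step: any element of either structure can be matched by an
element of the other, preserving satisfaction of the matrix. -/
lemma pairUp (k q : ℕ) (C D : BStr R ar τ m)
    (hC : ∀ w : C.W, ∃ l ≤ k, BChain C l w)
    (hD : ∀ w : D.W, ∃ l ≤ k, BChain D l w)
    (S : ∀ n, (Fin n → C.W) → (Fin n → D.W) → Prop)
    (hmv : ∀ n s t, S n s t → n < k * q →
      (∀ a, legal C s a → ∃ b, legal D t b ∧ S (n + 1) (Fin.snoc s a) (Fin.snoc t b)) ∧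
      (∀ b, legal D t b → ∃ a, legal C s a ∧ S (n + 1) (Fin.snoc s a) (Fin.snoc t b)))
    {n : ℕ} (ψ : FO R ar τ m (n + 1))
    (IH : ∀ (j : ℕ) (s : Fin j → C.W) (t : Fin j → D.W) (f : Fin (n + 1) → Tm m j),
      S j s t → j + k * ψ.qr ≤ k * q →
      (ψ.Sat C (fun i => posE C s (f i)) ↔ ψ.Sat D (fun i => posE D t (f i))))
    (j : ℕ) (s : Fin j → C.W) (t : Fin j → D.W) (f : Fin n → Tm m j)
    (hst : S j s t) (hbud : j + k * (ψ.qr + 1) ≤ k * q) :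
    (∀ a : C.W, ∃ b : D.W,
      (ψ.Sat C (Fin.snoc (fun i => posE C s (f i)) a) ↔
       ψ.Sat D (Fin.snoc (fun i => posE D t (f i)) b))) ∧
    (∀ b : D.W, ∃ a : C.W,
      (ψ.Sat C (Fin.snoc (fun i => posE C s (f i)) a) ↔
       ψ.Sat D (Fin.snoc (fun i => posE D t (f i)) b))) := by
  have hkk : k * 1 ≤ k * (ψ.qr + 1) := Nat.mul_le_mul le_rfl (by omega)
  have hms : k * (ψ.qr + 1) = k * ψ.qr + k := Nat.mul_succ k ψ.qr
  constructor
  · intro a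
    obtain ⟨l, hl, hch⟩ := hC a
    obtain ⟨s', t', hst', hres, htres, x, hx⟩ :=
      extendC C D (k * q) S hmv l a hch j s t hst (by omega)
    set f' : Fin (n + 1) → Tm m (j + l) :=
      Fin.snoc (fun i => Sum.map id (Fin.castAdd l) (f i)) x with hf'
    have hCval : (fun i => posE C s' (f' i)) = Fin.snoc (fun i => posE C s (f i)) a := by
      funext i
      refine Fin.lastCases ?_ ?_ i
      · simp [hf', Fin.snoc_last, hx]
      · intro i
        simp [hf', Fin.snoc_castSucc, posE_map C s' s hres]
    have hDval : (fun i => posE D t' (f' i)) =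
        Fin.snoc (fun i => posE D t (f i)) (posE D t' x) := by
      funext i
      refine Fin.lastCases ?_ ?_ i
      · simp [hf', Fin.snoc_last]
      · intro i
        simp [hf', Fin.snoc_castSucc, posE_map D t' t htres]
    refine ⟨posE D t' x, ?_⟩
    have := IH (j + l) s' t' f' hst' (by omega)
    rwa [hCval, hDval] at this
  · intro b
    obtain ⟨l, hl, hch⟩ := hD b
    obtain ⟨s', t', hst', hres, htres, x, hx⟩ :=
      extendD C D (k * q) S hmv l b hch j s t hst (by omega)
    set f' : Fin (n + 1) → Tm m (j + l) :=
      Fin.snoc (fun i => Sum.map id (Fin.castAdd l) (f i)) x with hf'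
    have hCval : (fun i => posE C s' (f' i)) =
        Fin.snoc (fun i => posE C s (f i)) (posE C s' x) := by
      funext i
      refine Fin.lastCases ?_ ?_ i
      · simp [hf', Fin.snoc_last]
      · intro i
        simp [hf', Fin.snoc_castSucc, posE_map C s' s hres]
    have hDval : (fun i => posE D t' (f' i)) = Fin.snoc (fun i => posE D t (f i)) b := by
      funext i
      refine Fin.lastCases ?_ ?_ i
      · simp [hf', Fin.snoc_last, hx]
      · intro i
        simp [hf', Fin.snoc_castSucc, posE_map D t' t htres]
    refine ⟨posE C s' x, ?_⟩
    have := IH (j + l) s' t' f' hst' (by omega)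
    rwa [hCval, hDval] at this

/-- The main Ehrenfeucht–Fraïssé argument. -/
lemma main_lemma (k q : ℕ) (C D : BStr R ar τ m)
    (hC : ∀ w : C.W, ∃ l ≤ k, BChain C l w)
    (hD : ∀ w : D.W, ∃ l ≤ k, BChain D l w)
    (S : ∀ n, (Fin n → C.W) → (Fin n → D.W) → Prop)
    (hiso : ∀ n s t, S n s t → PIso C D s t)
    (hmv : ∀ n s t, S n s t → n < k * q →
      (∀ a, legal C s a → ∃ b, legal D t b ∧ S (n + 1) (Fin.snoc s a) (Fin.snoc t b)) ∧
      (∀ b, legal D t b → ∃ a, legal C s a ∧ S (n + 1) (Fin.snoc s a) (Fin.snoc t b))) :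
    ∀ {n : ℕ} (φ : FO R ar τ m n) (j : ℕ) (s : Fin j → C.W) (t : Fin j → D.W)
      (f : Fin n → Tm m j), S j s t → j + k * φ.qr ≤ k * q →
      (φ.Sat C (fun i => posE C s (f i)) ↔ φ.Sat D (fun i => posE D t (f i))) := by
  intro n φ
  induction φ with
  | rel r ts =>
    intro j s t f hst _
    simp only [FO.Sat, tmEval_posE]
    exact (hiso _ _ _ hst).2.1 r fun i => Sum.elim Sum.inl f (ts i)
  | tr e t1 t2 =>
    intro j s t f hst _
    simp only [FO.Sat, tmEval_posE]
    exact (hiso _ _ _ hst).2.2 e (Sum.elim Sum.inl f t1) (Sum.elim Sum.inl f t2)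
  | eq t1 t2 =>
    intro j s t f hst _
    simp only [FO.Sat, tmEval_posE]
    exact (hiso _ _ _ hst).1 (Sum.elim Sum.inl f t1) (Sum.elim Sum.inl f t2)
  | not φ ih =>
    intro j s t f hst hbud
    simp only [FO.Sat]
    exact not_congr (ih j s t f hst hbud)
  | and φ ψ ih1 ih2 =>
    intro j s t f hst hbud
    have h1 : k * φ.qr ≤ k * max φ.qr ψ.qr := Nat.mul_le_mul le_rfl (le_max_left _ _)
    have h2 : k * ψ.qr ≤ k * max φ.qr ψ.qr := Nat.mul_le_mul le_rfl (le_max_right _ _)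
    have hbud' : j + k * max φ.qr ψ.qr ≤ k * q := hbud
    simp only [FO.Sat]
    exact and_congr (ih1 j s t f hst (by omega)) (ih2 j s t f hst (by omega))
  | or φ ψ ih1 ih2 =>
    intro j s t f hst hbud
    have h1 : k * φ.qr ≤ k * max φ.qr ψ.qr := Nat.mul_le_mul le_rfl (le_max_left _ _)
    have h2 : k * ψ.qr ≤ k * max φ.qr ψ.qr := Nat.mul_le_mul le_rfl (le_max_right _ _)
    have hbud' : j + k * max φ.qr ψ.qr ≤ k * q := hbud
    simp only [FO.Sat]
    exact or_congr (ih1 j s t f hst (by omega)) (ih2 j s t f hst (by omega))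
  | ex ψ ih =>
    intro j s t f hst hbud
    obtain ⟨hforth, hback⟩ := pairUp k q C D hC hD S hmv ψ ih j s t f hst hbud
    simp only [FO.Sat]
    constructor
    · rintro ⟨a, ha⟩
      obtain ⟨b, hab⟩ := hforth a
      exact ⟨b, hab.mp ha⟩
    · rintro ⟨b, hb⟩
      obtain ⟨a, hab⟩ := hback b
      exact ⟨a, hab.mpr hb⟩
  | all ψ ih =>
    intro j s t f hst hbud
    obtain ⟨hforth, hback⟩ := pairUp k q C D hC hD S hmv ψ ih j s t f hst hbud
    simp only [FO.Sat]
    constructor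
    · intro h b
      obtain ⟨a, hab⟩ := hback b
      exact hab.mp (h a)
    · intro h a
      obtain ⟨b, hab⟩ := hforth a
      exact hab.mpr (h b)

/-- For all `k, q > 0`: if Duplicator has a winning strategy in the `kq`-round
bounded back-and-forth game between `Rk(A,ā)` and `Rk(B,b̄)`, then
`Rk(A,ā) ≡_q Rk(B,b̄)`: they agree on all first-order sentences of quantifier rank
at most `q`. -/
theorem bounded_game_on_Rk_implies_elementary_equivalence (k q : ℕ) (hk : 0 < k)
    (hq : 0 < q) (A B : BStr R ar τ m)
    (h : BWin (RkStr A k) (RkStr B k) (k * q)) :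
    ∀ φ : FO R ar τ m 0, φ.qr ≤ q →
      (FO.SatS (RkStr A k) φ ↔ FO.SatS (RkStr B k) φ) := by
  intro φ hqr
  obtain ⟨S, hS0, hiso, hmv⟩ := h
  have hbud : 0 + k * φ.qr ≤ k * q := by
    have := Nat.mul_le_mul (le_refl k) hqr
    omega
  have hmain := main_lemma k q (RkStr A k) (RkStr B k) (all_chain A k) (all_chain B k)
    S hiso hmv φ 0 (fun i => i.elim0) (fun i => i.elim0) (fun i => i.elim0) hS0 hbud
  have e1 : (fun i : Fin 0 => posE (RkStr A k) (fun i => i.elim0)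
      ((fun i : Fin 0 => i.elim0) i)) = (fun i : Fin 0 => i.elim0) :=
    funext fun i => i.elim0
  have e2 : (fun i : Fin 0 => posE (RkStr B k) (fun i => i.elim0)
      ((fun i : Fin 0 => i.elim0) i)) = (fun i : Fin 0 => i.elim0) :=
    funext fun i => i.elim0
  rw [e1, e2] at hmain
  exact hmain
end

section
/- Back-and-forth equivalence characterization (Ehrenfeucht–Fraïssé for the bounded fragment): two m-pointed structures (A,ā) and (B,b̄) over a finite bounded vocabulary satisfy exactly the same bounded-fragment sentences of quantifier rank ≤ k if and only if the relation (A,ā) ≈_k (B,b̄) holds, defined inductively by: (A,ā) ≈_0 (B,b̄) iff they satisfy the same atomic sentences; (A,ā) ≈_{k+1} (B,b̄) iff (A,ā) ≈_k (B,b̄) holds and, for every constant c, transition relation E and element a with E(c^A, a), there is some b with E(c^B, b) and (A,ā,a) ≈_k (B,b̄,b), and symmetrically for every b with E(c^B, b) there is some a with E(c^A, a) and (A,ā,a) ≈_k (B,b̄,b) (back condition). -/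
variable {R : Type} {ar : R → ℕ} {τ : Type} {m : ℕ}

/-- Agreement on atomic sentences (in the constants). -/
def AtomEquiv (A B : BStr R ar τ m) : Prop :=
  (∀ i j : Fin m, A.c i = A.c j ↔ B.c i = B.c j) ∧
  (∀ (r : R) (v : Fin (ar r) → Fin m),
    ((A.rel r fun i => A.c (v i)) ↔ (B.rel r fun i => B.c (v i)))) ∧
  (∀ (e : τ) (i j : Fin m), A.tr e (A.c i) (A.c j) ↔ B.tr e (B.c i) (B.c j))

/-- Adjoin an element as a fresh constant (a played element of the game). -/
def addPt (A : BStr R ar τ m) (a : A.W) : BStr R ar τ (m + 1) where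
  W := A.W
  rel := A.rel
  tr := A.tr
  c := Fin.snoc A.c a

/-- The bounded back-and-forth relations `≈_k`: at level 0 the structures satisfy
the same atomic sentences; at level `k+1` they do so and, for every constant `c`,
transition relation `E` and element `a` with `E(c^A, a)`, there is `b` with
`E(c^B, b)` and `(A,ā,a) ≈_k (B,b̄,b)`, and symmetrically. -/
def bfe {R : Type} {ar : R → ℕ} {τ : Type} :
    ℕ → (m : ℕ) → BStr R ar τ m → BStr R ar τ m → Prop
  | 0, _, A, B => AtomEquiv A B
  | k + 1, m, A, B => AtomEquiv A B ∧
      (∀ (i : Fin m) (e : τ) (a : A.W), A.tr e (A.c i) a →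
        ∃ b : B.W, B.tr e (B.c i) b ∧ bfe k (m + 1) (addPt A a) (addPt B b)) ∧
      (∀ (i : Fin m) (e : τ) (b : B.W), B.tr e (B.c i) b →
        ∃ a : A.W, A.tr e (A.c i) a ∧ bfe k (m + 1) (addPt A a) (addPt B b))


/-! ### Auxiliary development for the EF theorem -/

attribute [local instance] Classical.propDecidable

/-- Atomic (rank-0) type data over `N` points. -/
abbrev Typ0 (R : Type) (ar : R → ℕ) (τ : Type) (N : ℕ) : Type :=
  (Fin N → Fin N → Bool) × ((r : R) → (Fin (ar r) → Fin N) → Bool) ×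
    (τ → Fin N → Fin N → Bool)

/-- Rank-`k` types over `N` points. -/
def Typ (R : Type) (ar : R → ℕ) (τ : Type) : ℕ → ℕ → Type
  | 0, N => Typ0 R ar τ N
  | k+1, N => Typ0 R ar τ N × (Fin N → τ → Typ R ar τ k (N+1) → Bool)

noncomputable def typFin [Fintype R] [Fintype τ] : ∀ (k N : ℕ), Fintype (Typ R ar τ k N)
  | 0, N => by unfold Typ Typ0; infer_instance
  | k+1, N => by
      letI := typFin k (N+1)
      unfold Typ Typ0; infer_instance

/-- The atomic type of a structure. -/
noncomputable def typ0 {N : ℕ} (A : BStr R ar τ N) : Typ0 R ar τ N :=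
  ⟨fun i j => decide (A.c i = A.c j),
   fun r w => decide (A.rel r fun p => A.c (w p)),
   fun e i j => decide (A.tr e (A.c i) (A.c j))⟩

/-- The rank-`k` type of a structure. -/
noncomputable def typ : ∀ (k : ℕ) {N : ℕ}, BStr R ar τ N → Typ R ar τ k N
  | 0, _, A => typ0 A
  | k+1, _, A => ⟨typ0 A,
      fun i e s => decide (∃ a, A.tr e (A.c i) a ∧ typ k (addPt A a) = s)⟩

/-- Adjoin several elements as fresh constants. -/
def addPts (A : BStr R ar τ m) {n : ℕ} (v : Fin n → A.W) : BStr R ar τ (m + n) :=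
  ⟨A.W, A.rel, A.tr, Fin.append A.c v⟩

lemma addPts_zero (A : BStr R ar τ m) (v : Fin 0 → A.W) : addPts A v = A := by
  have hv : v = Fin.elim0 := funext fun i => i.elim0
  have h : Fin.append A.c v = A.c := by
    subst hv
    funext i
    rw [Fin.append_elim0]
    exact congrArg A.c (Fin.ext rfl)
  show BStr.mk A.W A.rel A.tr (Fin.append A.c v) = A
  exact (congrArg (fun f => BStr.mk A.W A.rel A.tr f) h).trans rfl


lemma addPts_snoc (A : BStr R ar τ m) {n : ℕ} (v : Fin n → A.W) (w : A.W) :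
    addPts A (Fin.snoc v w) = addPt (addPts A v) w := by
  show BStr.mk A.W A.rel A.tr (Fin.append A.c (Fin.snoc v w)) =
    BStr.mk A.W A.rel A.tr (Fin.snoc (Fin.append A.c v) w)
  rw [Fin.append_snoc]

lemma tmEval_eq (A : BStr R ar τ m) {n : ℕ} (v : Fin n → A.W) (s : Tm m n) :
    tmEval A v s = (addPts A v).c (finSumFinEquiv s) := by
  cases s <;> simp [tmEval, addPts]

/-- The term naming point `p` of the extended structure. -/
def idx {n : ℕ} (p : Fin (m + n)) : Tm m n := finSumFinEquiv.symm p

lemma tmEval_idx (A : BStr R ar τ m) {n : ℕ} (v : Fin n → A.W) (p : Fin (m + n)) :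
    tmEval A v (idx p) = (addPts A v).c p := by
  rw [tmEval_eq, idx, Equiv.apply_symm_apply]

/-- A trivially true formula (needs at least one variable). -/
def truef {n : ℕ} : BFO R ar τ m (n+1) := .eq (Sum.inr 0) (Sum.inr 0)

/-- Finite conjunction. -/
def conj {n : ℕ} (l : List (BFO R ar τ m (n+1))) : BFO R ar τ m (n+1) :=
  l.foldr .and truef

lemma sat_conj (A : BStr R ar τ m) {n : ℕ} (v : Fin (n+1) → A.W)
    (l : List (BFO R ar τ m (n+1))) :
    (conj l).Sat A v ↔ ∀ φ ∈ l, φ.Sat A v := by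
  induction l with
  | nil => simp [conj, truef, BFO.Sat]
  | cons x xs ih => simpa [conj, BFO.Sat, and_assoc] using and_congr_right fun _ => ih

lemma qr_conj {n k : ℕ} (l : List (BFO R ar τ m (n+1))) (h : ∀ φ ∈ l, φ.qr ≤ k) :
    (conj l).qr ≤ k := by
  induction l with
  | nil => simp [conj, truef, BFO.qr]
  | cons x xs ih =>
      simp only [conj, List.foldr_cons] at *
      have := h x (by simp)
      have := ih (fun φ hφ => h φ (by simp [hφ]))
      simp [BFO.qr]; omega

lemma sat_cond (A : BStr R ar τ m) {n : ℕ} (φ : BFO R ar τ m n) (v : Fin n → A.W)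
    (b : Bool) {P : Prop} (h : φ.Sat A v ↔ P) :
    ((cond b φ (.not φ)).Sat A v ↔ decide P = b) := by
  cases b <;> simp [BFO.Sat, h]

/-- The atomic conjuncts describing an atomic type. -/
noncomputable def atoms0 [Fintype R] [Fintype τ] {n : ℕ} (t : Typ0 R ar τ (m+n)) :
    List (BFO R ar τ m n) :=
  ((List.finRange (m+n)).flatMap fun i => (List.finRange (m+n)).map fun j =>
      cond (t.1 i j) (.eq (idx i) (idx j)) (.not (.eq (idx i) (idx j)))) ++
  ((Finset.univ.toList (α := R)).flatMap fun r =>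
      (Finset.univ.toList (α := (Fin (ar r) → Fin (m+n)))).map fun w =>
      cond (t.2.1 r w) (.rel r fun p => idx (w p)) (.not (.rel r fun p => idx (w p)))) ++
  ((Finset.univ.toList (α := τ)).flatMap fun e => (List.finRange (m+n)).flatMap fun i =>
      (List.finRange (m+n)).map fun j =>
      cond (t.2.2 e i j) (.tr e (idx i) (idx j)) (.not (.tr e (idx i) (idx j))))

lemma typ0_eq_iff' {N : ℕ} (X : BStr R ar τ N) (t : Typ0 R ar τ N) :
    typ0 X = t ↔
      (∀ i j, decide (X.c i = X.c j) = t.1 i j) ∧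
      (∀ (r : R) (w : Fin (ar r) → Fin N), decide (X.rel r fun p => X.c (w p)) = t.2.1 r w) ∧
      (∀ (e : τ) (i j : Fin N), decide (X.tr e (X.c i) (X.c j)) = t.2.2 e i j) := by
  obtain ⟨t1, t2, t3⟩ := t
  simp [typ0, Prod.mk.injEq, funext_iff]

lemma sat_atoms0 [Fintype R] [Fintype τ] (A : BStr R ar τ m) {n : ℕ}
    (v : Fin n → A.W) (t : Typ0 R ar τ (m+n)) :
    (∀ φ ∈ atoms0 t, φ.Sat A v) ↔ typ0 (addPts A v) = t := by
  rw [typ0_eq_iff']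
  simp only [atoms0, List.mem_append, List.mem_flatMap, List.mem_map, List.mem_finRange,
    Finset.mem_toList, Finset.mem_univ, true_and]
  constructor
  · rintro h
    refine ⟨fun i j => ?_, fun r w => ?_, fun e i j => ?_⟩
    · exact (sat_cond A _ v _ (by simp [BFO.Sat, tmEval_idx, addPts])).mp
        (h _ (Or.inl (Or.inl ⟨i, ⟨j, rfl⟩⟩)))
    · exact (sat_cond A _ v _ (by simp [BFO.Sat, tmEval_idx, addPts])).mp
        (h _ (Or.inl (Or.inr ⟨r, ⟨w, rfl⟩⟩)))
    · exact (sat_cond A _ v _ (by simp [BFO.Sat, tmEval_idx, addPts])).mp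
        (h _ (Or.inr ⟨e, ⟨i, ⟨j, rfl⟩⟩⟩))
  · rintro ⟨h1, h2, h3⟩ φ (⟨⟨i, j, rfl⟩ | ⟨r, w, rfl⟩⟩ | ⟨e, i, j, rfl⟩)
    · exact (sat_cond A _ v _ (by simp [BFO.Sat, tmEval_idx, addPts])).mpr (h1 i j)
    · exact (sat_cond A _ v _ (by simp [BFO.Sat, tmEval_idx, addPts])).mpr (h2 r w)
    · exact (sat_cond A _ v _ (by simp [BFO.Sat, tmEval_idx, addPts])).mpr (h3 e i j)

lemma qr_atoms0 [Fintype R] [Fintype τ] {n : ℕ} (t : Typ0 R ar τ (m+n)) :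
    ∀ φ ∈ atoms0 t, φ.qr = 0 := by
  intro φ hφ
  simp only [atoms0, List.mem_append, List.mem_flatMap, List.mem_map, List.mem_finRange,
    Finset.mem_toList, Finset.mem_univ, true_and] at hφ
  have qc : ∀ (b : Bool) (ψ : BFO R ar τ m n), (cond b ψ (.not ψ)).qr = ψ.qr := by
    intro b ψ; cases b <;> simp [BFO.qr]
  rcases hφ with (⟨⟨i, j, rfl⟩ | ⟨r, w, rfl⟩⟩ | ⟨e, i, j, rfl⟩) <;> simp [qc, BFO.qr]

lemma addPts_one (A : BStr R ar τ m) (v : Fin 0 → A.W) (a : A.W) :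
    addPts A (Fin.snoc v a) = addPt A a := by
  have h0 : Fin.append A.c v = A.c := by
    have hv : v = Fin.elim0 := funext fun i => i.elim0
    subst hv
    funext i
    rw [Fin.append_elim0]
    exact congrArg A.c (Fin.ext rfl)
  have h : Fin.append A.c (Fin.snoc v a) = Fin.snoc A.c a := by
    rw [Fin.append_snoc]
    exact congrArg (fun f : Fin (m+0) → A.W => (Fin.snoc f a : Fin (m+0+1) → A.W)) h0
  exact congrArg (fun f => BStr.mk A.W A.rel A.tr f) h

lemma typ_succ_eq_iff (k : ℕ) {N : ℕ} (X : BStr R ar τ N) (t : Typ R ar τ (k+1) N) :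
    typ (k+1) X = t ↔ typ0 X = t.1 ∧
      ∀ (i : Fin N) (e : τ) (s : Typ R ar τ k (N+1)),
        decide (∃ a, X.tr e (X.c i) a ∧ typ k (addPt X a) = s) = t.2 i e s := by
  show (⟨typ0 X, fun i e s => decide (∃ a, X.tr e (X.c i) a ∧ typ k (addPt X a) = s)⟩ :
      Typ0 R ar τ N × (Fin N → τ → Typ R ar τ k (N+1) → Bool)) = t ↔ _
  exact Prod.ext_iff.trans (and_congr Iff.rfl (by simp [funext_iff]))

/-- The quantifier conjuncts at level `k+1`. -/
noncomputable def qlist [Fintype R] [Fintype τ] (k n : ℕ)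
    (t2 : Fin (m+(n+1)) → τ → Typ R ar τ k (m+(n+1)+1) → Bool)
    (rec : Typ R ar τ k (m+(n+1)+1) → BFO R ar τ m (n+1+1)) :
    List (BFO R ar τ m (n+1)) :=
  letI := typFin (R := R) (ar := ar) (τ := τ) k (m+(n+1)+1)
  (List.finRange (m+(n+1))).flatMap fun i =>
    (Finset.univ.toList (α := τ)).flatMap fun e =>
      (Finset.univ.toList (α := Typ R ar τ k (m+(n+1)+1))).map fun s =>
        cond (t2 i e s) (.bex e (idx i) (rec s)) (.not (.bex e (idx i) (rec s)))

/-- The rank-`k` Hintikka formula of a type (with at least one free variable). -/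
noncomputable def chi [Fintype R] [Fintype τ] :
    ∀ (k : ℕ) {n : ℕ}, Typ R ar τ k (m+(n+1)) → BFO R ar τ m (n+1)
  | 0, _, t => conj (atoms0 t)
  | k+1, n, t => conj (atoms0 t.1 ++ qlist k n t.2 (chi k (n := n+1)))

lemma chi_spec [Fintype R] [Fintype τ] :
    ∀ (k : ℕ) {n : ℕ} (t : Typ R ar τ k (m+(n+1))) (A : BStr R ar τ m)
      (v : Fin (n+1) → A.W), (chi k t).Sat A v ↔ typ k (addPts A v) = t
  | 0, n, t, A, v => by
      rw [show chi 0 t = conj (atoms0 t) from rfl, sat_conj]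
      exact sat_atoms0 A v t
  | k+1, n, t, A, v => by
      have bexIff : ∀ (i : Fin (m+(n+1))) (e : τ) (s : Typ R ar τ k (m+(n+1)+1)),
          (BFO.bex e (idx i) (chi k (n := n+1) s)).Sat A v ↔
            ∃ a, (addPts A v).tr e ((addPts A v).c i) a ∧
              typ k (addPt (addPts A v) a) = s := by
        intro i e s
        show (∃ w, A.tr e (tmEval A v (idx i)) w ∧ (chi k (n := n+1) s).Sat A (Fin.snoc v w)) ↔ _
        exact exists_congr fun w => and_congr (by rw [tmEval_idx]; exact Iff.rfl)
          ((chi_spec k s A (Fin.snoc v w)).trans (by rw [addPts_snoc]))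
      rw [show chi (k+1) t = conj (atoms0 t.1 ++ qlist k n t.2 (chi k (n := n+1))) from rfl,
        sat_conj, List.forall_mem_append, sat_atoms0, typ_succ_eq_iff]
      refine and_congr Iff.rfl ?_
      constructor
      · intro h i e s
        refine (sat_cond A _ v _ (bexIff i e s)).mp (h _ ?_)
        simp only [qlist, List.mem_flatMap, List.mem_map, List.mem_finRange,
          Finset.mem_toList, Finset.mem_univ, true_and]
        exact ⟨i, e, s, rfl⟩
      · intro h φ hφ
        simp only [qlist, List.mem_flatMap, List.mem_map, List.mem_finRange,
          Finset.mem_toList, Finset.mem_univ, true_and] at hφ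
        obtain ⟨i, e, s, rfl⟩ := hφ
        exact (sat_cond A _ v _ (bexIff i e s)).mpr (h i e s)

lemma chi_qr [Fintype R] [Fintype τ] :
    ∀ (k : ℕ) {n : ℕ} (t : Typ R ar τ k (m+(n+1))), (chi k t).qr ≤ k
  | 0, n, t => qr_conj _ fun φ hφ => (qr_atoms0 t φ hφ).le
  | k+1, n, t => by
      refine qr_conj _ fun φ hφ => ?_
      rcases List.mem_append.mp hφ with h | h
      · exact (qr_atoms0 _ φ h).le.trans (Nat.zero_le _)
      · simp only [qlist, List.mem_flatMap, List.mem_map, List.mem_finRange,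
          Finset.mem_toList, Finset.mem_univ, true_and] at h
        obtain ⟨i, e, s, rfl⟩ := h
        have := chi_qr k (n := n+1) s
        cases t.2 i e s <;> simp [BFO.qr] <;> omega

lemma typ0_eq_iff_atom {N : ℕ} (X Y : BStr R ar τ N) :
    typ0 X = typ0 Y ↔ AtomEquiv X Y := by
  rw [typ0_eq_iff']
  simp only [typ0, AtomEquiv, decide_eq_decide]

lemma typ0_of_typ {k N : ℕ} {X Y : BStr R ar τ N} (h : typ k X = typ k Y) :
    typ0 X = typ0 Y := by
  cases k with
  | zero => exact h
  | succ k => exact congrArg (fun z : Typ R ar τ (k+1) N => z.1) h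

/-- Forth property extracted from equality of rank-`(k+1)` types. -/
lemma typ_forth {k N : ℕ} {X Y : BStr R ar τ N} (h : typ (k+1) X = typ (k+1) Y)
    (i : Fin N) (e : τ) (a : X.W) (ha : X.tr e (X.c i) a) :
    ∃ b : Y.W, Y.tr e (Y.c i) b ∧ typ k (addPt X a) = typ k (addPt Y b) := by
  have key : decide (∃ a', X.tr e (X.c i) a' ∧ typ k (addPt X a') = typ k (addPt X a))
      = decide (∃ b, Y.tr e (Y.c i) b ∧ typ k (addPt Y b) = typ k (addPt X a)) :=
    congrFun (congrFun (congrFun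
      (congrArg (fun z : Typ R ar τ (k+1) N => z.2) h) i) e) _
  rw [decide_eq_decide] at key
  obtain ⟨b, hb, hbt⟩ := key.mp ⟨a, ha, rfl⟩
  exact ⟨b, hb, hbt.symm⟩

lemma bfe_iff_typ : ∀ (k : ℕ) {N : ℕ} (A B : BStr R ar τ N),
    bfe k N A B ↔ typ k A = typ k B
  | 0, N, A, B => by
      show AtomEquiv A B ↔ typ0 A = typ0 B
      exact (typ0_eq_iff_atom A B).symm
  | k+1, N, A, B => by
      simp only [bfe]
      rw [typ_succ_eq_iff]
      constructor
      · rintro ⟨hA, hf, hb⟩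
        refine ⟨(typ0_eq_iff_atom A B).mpr hA, fun i e s => ?_⟩
        show decide _ = decide _
        rw [decide_eq_decide]
        constructor
        · rintro ⟨a, ha, rfl⟩
          obtain ⟨b, hbt, hk⟩ := hf i e a ha
          exact ⟨b, hbt, ((bfe_iff_typ k _ _).mp hk).symm⟩
        · rintro ⟨b, hbt, hs⟩
          obtain ⟨a, hat, hk⟩ := hb i e b hbt
          exact ⟨a, hat, ((bfe_iff_typ k _ _).mp hk).trans hs⟩
      · rintro ⟨h1, h2⟩
        have h : typ (k+1) A = typ (k+1) B := by
          rw [typ_succ_eq_iff]; exact ⟨h1, h2⟩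
        refine ⟨(typ0_eq_iff_atom A B).mp h1, fun i e a ha => ?_, fun i e b hbt => ?_⟩
        · obtain ⟨b, hbt, hk⟩ := typ_forth h i e a ha
          exact ⟨b, hbt, (bfe_iff_typ k _ _).mpr hk⟩
        · obtain ⟨a, hat, hk⟩ := typ_forth h.symm i e b hbt
          exact ⟨a, hat, (bfe_iff_typ k _ _).mpr hk.symm⟩

/-- Transfer of satisfaction along equality of types (the easy direction). -/
lemma sat_of_typ : ∀ {n : ℕ} (ψ : BFO R ar τ m n) (k : ℕ), ψ.qr ≤ k →
    ∀ (A B : BStr R ar τ m) (v : Fin n → A.W) (w : Fin n → B.W),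
      typ k (addPts A v) = typ k (addPts B w) → (ψ.Sat A v ↔ ψ.Sat B w)
  | n, .rel r ts, k, _, A, B, v, w, h => by
      have h0 := (typ0_eq_iff_atom _ _).mp (typ0_of_typ h)
      show (addPts A v).rel r (fun p => tmEval A v (ts p)) ↔
        (addPts B w).rel r (fun p => tmEval B w (ts p))
      simp only [tmEval_eq]
      exact h0.2.1 r fun p => finSumFinEquiv (ts p)
  | n, .tr e t u, k, _, A, B, v, w, h => by
      have h0 := (typ0_eq_iff_atom _ _).mp (typ0_of_typ h)
      show (addPts A v).tr e (tmEval A v t) (tmEval A v u) ↔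
        (addPts B w).tr e (tmEval B w t) (tmEval B w u)
      simp only [tmEval_eq]
      exact h0.2.2 e (finSumFinEquiv t) (finSumFinEquiv u)
  | n, .eq t u, k, _, A, B, v, w, h => by
      have h0 := (typ0_eq_iff_atom _ _).mp (typ0_of_typ h)
      show tmEval A v t = tmEval A v u ↔ tmEval B w t = tmEval B w u
      simp only [tmEval_eq]
      exact h0.1 (finSumFinEquiv t) (finSumFinEquiv u)
  | n, .not φ, k, hq, A, B, v, w, h =>
      not_congr (sat_of_typ φ k hq A B v w h)
  | n, .and φ ψ, k, hq, A, B, v, w, h =>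
      and_congr (sat_of_typ φ k (le_trans (le_max_left _ _) hq) A B v w h)
        (sat_of_typ ψ k (le_trans (le_max_right _ _) hq) A B v w h)
  | n, .or φ ψ, k, hq, A, B, v, w, h =>
      or_congr (sat_of_typ φ k (le_trans (le_max_left _ _) hq) A B v w h)
        (sat_of_typ ψ k (le_trans (le_max_right _ _) hq) A B v w h)
  | n, .bex e t φ, k, hq, A, B, v, w, h => by
      obtain ⟨k', rfl⟩ : ∃ k', k = k' + 1 := by
        have : φ.qr + 1 ≤ k := hq
        exact ⟨k - 1, by omega⟩
      have hφ : φ.qr ≤ k' := by have : φ.qr + 1 ≤ k' + 1 := hq; omega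
      show (∃ a, A.tr e (tmEval A v t) a ∧ φ.Sat A (Fin.snoc v a)) ↔
        (∃ b, B.tr e (tmEval B w t) b ∧ φ.Sat B (Fin.snoc w b))
      constructor
      · rintro ⟨a, ha, hsat⟩
        obtain ⟨b, hbt, hk⟩ := typ_forth h (finSumFinEquiv t) e a
          (by rwa [tmEval_eq] at ha)
        rw [← addPts_snoc A v a, ← addPts_snoc B w b] at hk
        exact ⟨b, by rwa [tmEval_eq],
          (sat_of_typ φ k' hφ A B (Fin.snoc v a) (Fin.snoc w b) hk).mp hsat⟩
      · rintro ⟨b, hbt, hsat⟩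
        obtain ⟨a, hat, hk⟩ := typ_forth h.symm (finSumFinEquiv t) e b
          (by rwa [tmEval_eq] at hbt)
        rw [← addPts_snoc B w b, ← addPts_snoc A v a] at hk
        exact ⟨a, by rwa [tmEval_eq],
          (sat_of_typ φ k' hφ A B (Fin.snoc v a) (Fin.snoc w b) hk.symm).mpr hsat⟩
  | n, .ball e t φ, k, hq, A, B, v, w, h => by
      obtain ⟨k', rfl⟩ : ∃ k', k = k' + 1 := by
        have : φ.qr + 1 ≤ k := hq
        exact ⟨k - 1, by omega⟩
      have hφ : φ.qr ≤ k' := by have : φ.qr + 1 ≤ k' + 1 := hq; omega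
      show (∀ a, A.tr e (tmEval A v t) a → φ.Sat A (Fin.snoc v a)) ↔
        (∀ b, B.tr e (tmEval B w t) b → φ.Sat B (Fin.snoc w b))
      constructor
      · rintro hall b hbt
        obtain ⟨a, hat, hk⟩ := typ_forth h.symm (finSumFinEquiv t) e b
          (by rwa [tmEval_eq] at hbt)
        rw [← addPts_snoc B w b, ← addPts_snoc A v a] at hk
        exact (sat_of_typ φ k' hφ A B (Fin.snoc v a) (Fin.snoc w b) hk.symm).mp
          (hall a (by rwa [tmEval_eq]))
      · rintro hall a hat
        obtain ⟨b, hbt, hk⟩ := typ_forth h (finSumFinEquiv t) e a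
          (by rwa [tmEval_eq] at hat)
        rw [← addPts_snoc A v a, ← addPts_snoc B w b] at hk
        exact (sat_of_typ φ k' hφ A B (Fin.snoc v a) (Fin.snoc w b) hk).mpr
          (hall b (by rwa [tmEval_eq]))

/-- Ehrenfeucht–Fraïssé theorem for the bounded fragment: two `m`-pointed
structures over a finite bounded vocabulary satisfy the same bounded-fragment
sentences of quantifier rank ≤ k iff `(A,ā) ≈_k (B,b̄)`. -/
theorem bounded_EF_theorem [Fintype R] [Fintype τ] (k : ℕ) (A B : BStr R ar τ m) :
    (∀ ψ : BFO R ar τ m 0, ψ.qr ≤ k → (BFO.SatS A ψ ↔ BFO.SatS B ψ)) ↔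
      bfe k m A B := by
  constructor
  · intro h
    refine (bfe_iff_typ k A B).mpr ?_
    have hAtom : AtomEquiv A B :=
      ⟨fun i j => h (.eq (Sum.inl i) (Sum.inl j)) (Nat.zero_le _),
       fun r w => h (.rel r fun p => Sum.inl (w p)) (Nat.zero_le _),
       fun e i j => h (.tr e (Sum.inl i) (Sum.inl j)) (Nat.zero_le _)⟩
    cases k with
    | zero => exact (typ0_eq_iff_atom A B).mpr hAtom
    | succ k' =>
      rw [typ_succ_eq_iff]
      refine ⟨(typ0_eq_iff_atom A B).mpr hAtom, fun i e s => ?_⟩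
      show decide _ = decide _
      rw [decide_eq_decide]
      have hqr : (BFO.bex e (Sum.inl i) (chi k' (n := 0) s)).qr ≤ k' + 1 := by
        have := chi_qr (m := m) k' (n := 0) s
        show (chi k' (n := 0) s).qr + 1 ≤ k' + 1
        omega
      have key := h (.bex e (Sum.inl i) (chi k' (n := 0) s)) hqr
      have convA : BFO.SatS A (.bex e (Sum.inl i) (chi k' (n := 0) s)) ↔
          ∃ a, A.tr e (A.c i) a ∧ typ k' (addPt A a) = s := by
        show (∃ a, A.tr e (A.c i) a ∧
          (chi k' (n := 0) s).Sat A (Fin.snoc (fun p => p.elim0) a)) ↔ _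
        refine exists_congr fun a => and_congr Iff.rfl ?_
        rw [chi_spec, addPts_one]
      have convB : BFO.SatS B (.bex e (Sum.inl i) (chi k' (n := 0) s)) ↔
          ∃ b, B.tr e (B.c i) b ∧ typ k' (addPt B b) = s := by
        show (∃ b, B.tr e (B.c i) b ∧
          (chi k' (n := 0) s).Sat B (Fin.snoc (fun p => p.elim0) b)) ↔ _
        refine exists_congr fun b => and_congr Iff.rfl ?_
        rw [chi_spec, addPts_one]
      exact convA.symm.trans (key.trans convB)
  · intro hb ψ hq
    exact sat_of_typ ψ k hq A B (fun p => p.elim0) (fun p => p.elim0)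
      (by rw [addPts_zero A, addPts_zero B]; exact (bfe_iff_typ k A B).mp hb)
end

section
/- Counting quantifiers over finite disjunctions of bounds reduce to the bounded counting fragment: for k > 0, any formula ∃^{≥i} y. (β₁ ∨ ⋯ ∨ β_k) ∧ φ, where each β_j is of the form E_j(t_j, y) with E_j a transition relation and t_j ≠ y, is logically equivalent to a Boolean combination of bounded counting formulas of the same quantifier depth. -/
variable {R : Type} {ar : R → ℕ} {τ : Type} {m : ℕ}

/-- First-order formulas with counting quantifiers `∃^{≥i}`. -/
inductive CFO (R : Type) (ar : R → ℕ) (τ : Type) (m : ℕ) : ℕ → Type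
  | fls {n : ℕ} : CFO R ar τ m n
  | rel {n : ℕ} (r : R) (t : Fin (ar r) → Tm m n) : CFO R ar τ m n
  | tr {n : ℕ} (e : τ) (t u : Tm m n) : CFO R ar τ m n
  | eq {n : ℕ} (t u : Tm m n) : CFO R ar τ m n
  | not {n : ℕ} (φ : CFO R ar τ m n) : CFO R ar τ m n
  | and {n : ℕ} (φ ψ : CFO R ar τ m n) : CFO R ar τ m n
  | or {n : ℕ} (φ ψ : CFO R ar τ m n) : CFO R ar τ m n
  | cex {n : ℕ} (i : ℕ) (φ : CFO R ar τ m (n + 1)) : CFO R ar τ m n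

/-- Satisfaction; `cex i φ` holds if there are at least `i` distinct witnesses. -/
def CFO.Sat (A : BStr R ar τ m) : ∀ {n : ℕ}, CFO R ar τ m n → (Fin n → A.W) → Prop
  | _, .fls, _ => False
  | _, .rel r t, v => A.rel r fun i => tmEval A v (t i)
  | _, .tr e t u, v => A.tr e (tmEval A v t) (tmEval A v u)
  | _, .eq t u, v => tmEval A v t = tmEval A v u
  | _, .not φ, v => ¬ CFO.Sat A φ v
  | _, .and φ ψ, v => CFO.Sat A φ v ∧ CFO.Sat A ψ v
  | _, .or φ ψ, v => CFO.Sat A φ v ∨ CFO.Sat A ψ v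
  | _, .cex i φ, v => ∃ f : Fin i → A.W, Function.Injective f ∧
      ∀ j, CFO.Sat A φ (Fin.snoc v (f j))

/-- Quantifier (counting) depth. -/
def CFO.depth : ∀ {n : ℕ}, CFO R ar τ m n → ℕ
  | _, .fls => 0
  | _, .rel _ _ => 0
  | _, .tr _ _ _ => 0
  | _, .eq _ _ => 0
  | _, .not φ => φ.depth
  | _, .and φ ψ => max φ.depth ψ.depth
  | _, .or φ ψ => max φ.depth ψ.depth
  | _, .cex _ φ => φ.depth + 1

/-- Weakening a term into a context with one more variable. -/
def tmUp {m n : ℕ} (t : Tm m n) : Tm m (n + 1) :=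
  Sum.map id Fin.castSucc t


/-- The bounded counting fragment: all counting quantifiers are of the form
`∃^{≥i} y.(E(t,y) ∧ φ)` with `E` a transition relation and `t` a term distinct from
the bound variable `y`. -/
inductive IsB : ∀ {n : ℕ}, CFO R ar τ m n → Prop
  | fls {n : ℕ} : IsB (.fls (n := n))
  | rel {n : ℕ} (r : R) (t : Fin (ar r) → Tm m n) : IsB (.rel r t)
  | tr {n : ℕ} (e : τ) (t u : Tm m n) : IsB (.tr e t u)
  | eq {n : ℕ} (t u : Tm m n) : IsB (.eq t u)
  | not {n : ℕ} {φ : CFO R ar τ m n} : IsB φ → IsB (.not φ)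
  | and {n : ℕ} {φ ψ : CFO R ar τ m n} : IsB φ → IsB ψ → IsB (.and φ ψ)
  | or {n : ℕ} {φ ψ : CFO R ar τ m n} : IsB φ → IsB ψ → IsB (.or φ ψ)
  | bex {n : ℕ} (i : ℕ) (e : τ) (t : Tm m n) {φ : CFO R ar τ m (n + 1)} :
      IsB φ → IsB (.cex i (.and (.tr e (tmUp t) (Sum.inr (Fin.last n))) φ))

/-- Boolean combinations of bounded counting formulas. -/
inductive IsBC : ∀ {n : ℕ}, CFO R ar τ m n → Prop
  | base {n : ℕ} {φ : CFO R ar τ m n} : IsB φ → IsBC φ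
  | not {n : ℕ} {φ : CFO R ar τ m n} : IsBC φ → IsBC (.not φ)
  | and {n : ℕ} {φ ψ : CFO R ar τ m n} : IsBC φ → IsBC ψ → IsBC (.and φ ψ)
  | or {n : ℕ} {φ ψ : CFO R ar τ m n} : IsBC φ → IsBC ψ → IsBC (.or φ ψ)

/-- Finite disjunction. -/
def bigOrF {n : ℕ} : ∀ {k : ℕ}, (Fin (k + 1) → CFO R ar τ m n) → CFO R ar τ m n
  | 0, f => f 0
  | _ + 1, f => .or (bigOrF fun j => f j.castSucc) (f (Fin.last _))


lemma split_inj {W : Type} (P Q : W → Prop) (hd : ∀ w, P w → Q w → False) (i : ℕ) :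
    (∃ f : Fin i → W, Function.Injective f ∧ ∀ j, P (f j) ∨ Q (f j)) ↔
    ∃ a b : ℕ, a + b = i ∧ (∃ g : Fin a → W, Function.Injective g ∧ ∀ j, P (g j)) ∧
      (∃ h : Fin b → W, Function.Injective h ∧ ∀ j, Q (h j)) := by
  classical
  constructor
  · rintro ⟨f, hf, hPQ⟩
    set s : Finset (Fin i) := Finset.univ.filter (fun j => P (f j)) with hsdef
    refine ⟨s.card, sᶜ.card, ?_, ⟨fun j => f (s.equivFin.symm j), ?_, ?_⟩,
      ⟨fun j => f (sᶜ.equivFin.symm j), ?_, ?_⟩⟩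
    · rw [Finset.card_add_card_compl, Fintype.card_fin]
    · intro j j' hjj
      exact s.equivFin.symm.injective (Subtype.ext (hf hjj))
    · intro j
      have := (s.equivFin.symm j).2
      exact (Finset.mem_filter.mp this).2
    · intro j j' hjj
      exact sᶜ.equivFin.symm.injective (Subtype.ext (hf hjj))
    · intro j
      have hc := (sᶜ.equivFin.symm j).2
      rcases hPQ (sᶜ.equivFin.symm j) with h | h
      · exact absurd (show (↑(sᶜ.equivFin.symm j) : Fin i) ∈ s from
          Finset.mem_filter.mpr ⟨Finset.mem_univ _, h⟩) (Finset.mem_compl.mp hc)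
      · exact h
  · rintro ⟨a, b, rfl, ⟨g, hg, hgP⟩, ⟨h, hh, hhQ⟩⟩
    refine ⟨Sum.elim g h ∘ finSumFinEquiv.symm, ?_, ?_⟩
    · apply Function.Injective.comp ?_ finSumFinEquiv.symm.injective
      rintro (x | x) (y | y) hxy <;> simp only [Sum.elim_inl, Sum.elim_inr] at hxy
      · exact congrArg _ (hg hxy)
      · exact absurd (hgP x) (fun hp => hd _ (hxy ▸ hp) (hhQ y))
      · exact absurd (hhQ x) (fun hq => hd _ (hgP y) (hxy ▸ hq))
      · exact congrArg _ (hh hxy)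
    · intro j
      simp only [Function.comp]
      rcases e : finSumFinEquiv.symm j with x | x <;> simp only [Sum.elim_inl, Sum.elim_inr]
      · exact Or.inl (hgP x)
      · exact Or.inr (hhQ x)

section Aux
variable {R : Type} {ar : R → ℕ} {τ : Type} {m : ℕ}

lemma bigOrF_sat {n k : ℕ} (f : Fin (k + 1) → CFO R ar τ m n) (A : BStr R ar τ m)
    (v : Fin n → A.W) : CFO.Sat A (bigOrF f) v ↔ ∃ j, CFO.Sat A (f j) v := by
  induction k with
  | zero =>
    exact ⟨fun h => ⟨0, h⟩, fun ⟨j, h⟩ => by rwa [show j = 0 from Fin.ext (by omega)] at h⟩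
  | succ k ihk =>
    show CFO.Sat A (bigOrF fun j => f j.castSucc) v ∨ CFO.Sat A (f (Fin.last _)) v ↔ _
    rw [ihk]
    constructor
    · rintro (⟨j, hj⟩ | h)
      exacts [⟨j.castSucc, hj⟩, ⟨Fin.last _, h⟩]
    · rintro ⟨j, hj⟩
      rcases Fin.eq_castSucc_or_eq_last j with ⟨x, rfl⟩ | rfl
      exacts [Or.inl ⟨x, hj⟩, Or.inr hj]

lemma bigOrF_isBC {n k : ℕ} (f : Fin (k + 1) → CFO R ar τ m n)
    (h : ∀ j, IsBC (f j)) : IsBC (bigOrF f) := by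
  induction k with
  | zero => exact h 0
  | succ k ihk => exact IsBC.or (ihk _ fun j => h j.castSucc) (h (Fin.last _))

lemma bigOrF_depth_le {n k d : ℕ} (f : Fin (k + 1) → CFO R ar τ m n)
    (h : ∀ j, (f j).depth ≤ d) : (bigOrF f).depth ≤ d := by
  induction k with
  | zero => exact h 0
  | succ k ihk => exact max_le (ihk _ fun j => h j.castSucc) (h (Fin.last _))

lemma bigOrF_tr_depth {n : ℕ} : ∀ (K : ℕ) (γ : Fin (K + 1) → τ × Tm m n),
    (bigOrF fun j => (CFO.tr (γ j).1 (tmUp (γ j).2) (Sum.inr (Fin.last n)) :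
      CFO R ar τ m (n + 1))).depth = 0 := by
  intro K
  induction K with
  | zero => intro γ; simp [bigOrF, CFO.depth]
  | succ K ihK =>
    intro γ
    have := ihK fun j => γ j.castSucc
    simp [bigOrF, CFO.depth, this]

lemma tr_target_depth {n K : ℕ} (i : ℕ) (γ : Fin (K + 1) → τ × Tm m n)
    (ψ : CFO R ar τ m (n + 1)) :
    (CFO.cex i (.and (bigOrF fun j => CFO.tr (γ j).1 (tmUp (γ j).2)
      (Sum.inr (Fin.last n))) ψ)).depth = ψ.depth + 1 := by
  simp [CFO.depth, bigOrF_tr_depth K γ]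

lemma main_aux : ∀ (k i n : ℕ) (β : Fin (k + 1) → τ × Tm m n)
    (ψ : CFO R ar τ m (n + 1)), IsB ψ →
    ∃ χ : CFO R ar τ m n, IsBC χ ∧
      χ.depth ≤ (CFO.cex i (.and
        (bigOrF fun j => CFO.tr (β j).1 (tmUp (β j).2) (Sum.inr (Fin.last n))) ψ)).depth ∧
      ∀ (A : BStr R ar τ m) (v : Fin n → A.W),
        (CFO.Sat A χ v ↔ CFO.Sat A (CFO.cex i (.and
          (bigOrF fun j => CFO.tr (β j).1 (tmUp (β j).2) (Sum.inr (Fin.last n))) ψ)) v) := by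
  intro k
  induction k with
  | zero =>
    intro i n β ψ hψ
    exact ⟨_, IsBC.base (IsB.bex i (β 0).1 (β 0).2 hψ), le_refl _, fun A v => Iff.rfl⟩
  | succ k ih =>
    intro i n β ψ hψ
    classical
    have hψ' : IsB (CFO.and (.not (.tr (β (Fin.last (k + 1))).1
        (tmUp (β (Fin.last (k + 1))).2) (Sum.inr (Fin.last n)))) ψ) :=
      IsB.and (IsB.not (IsB.tr _ _ _)) hψ
    choose χf h1 h2 h3 using fun a : Fin (i + 1) =>
      ih a n (fun j => β j.castSucc) _ hψ'
    refine ⟨bigOrF (fun a : Fin (i + 1) => CFO.and (χf a)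
      (.cex (i - a) (.and (.tr (β (Fin.last (k + 1))).1 (tmUp (β (Fin.last (k + 1))).2)
        (Sum.inr (Fin.last n))) ψ))), ?_, ?_, ?_⟩
    · exact bigOrF_isBC _ fun a => IsBC.and (h1 a) (IsBC.base (IsB.bex _ _ _ hψ))
    · rw [tr_target_depth]
      apply bigOrF_depth_le
      intro a
      have hda := h2 a
      rw [tr_target_depth] at hda
      simp only [CFO.depth, Nat.zero_max, Nat.max_zero] at hda ⊢
      exact max_le hda le_rfl
    · intro A v
      rw [bigOrF_sat]
      have key := split_inj
        (fun w => CFO.Sat A (bigOrF fun j : Fin (k + 1) => CFO.tr (β j.castSucc).1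
            (tmUp (β j.castSucc).2) (Sum.inr (Fin.last n))) (Fin.snoc v w) ∧
          (¬ CFO.Sat A (CFO.tr (β (Fin.last (k + 1))).1 (tmUp (β (Fin.last (k + 1))).2)
            (Sum.inr (Fin.last n))) (Fin.snoc v w) ∧ CFO.Sat A ψ (Fin.snoc v w)))
        (fun w => CFO.Sat A (CFO.tr (β (Fin.last (k + 1))).1 (tmUp (β (Fin.last (k + 1))).2)
            (Sum.inr (Fin.last n))) (Fin.snoc v w) ∧ CFO.Sat A ψ (Fin.snoc v w))
        (fun w hp hq => hp.2.1 hq.1) i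
      constructor
      · rintro ⟨a, hχ, hQ⟩
        have hP := (h3 a A v).mp hχ
        obtain ⟨f, hf, hfj⟩ := key.mpr ⟨a, i - a, by have := a.isLt; omega, hP, hQ⟩
        refine ⟨f, hf, fun j => ?_⟩
        rcases hfj j with ⟨hB, _, hψw⟩ | ⟨hβ, hψw⟩
        · exact show _ ∧ _ from ⟨Or.inl hB, hψw⟩
        · exact show _ ∧ _ from ⟨Or.inr hβ, hψw⟩
      · rintro ⟨f, hf, hfj⟩
        obtain ⟨a, b, hab, hP, hQ⟩ := key.mp ⟨f, hf, fun j => by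
          obtain ⟨hor, hψw⟩ := hfj j
          by_cases hβ : CFO.Sat A (CFO.tr (β (Fin.last (k + 1))).1
              (tmUp (β (Fin.last (k + 1))).2) (Sum.inr (Fin.last n))) (Fin.snoc v (f j))
          · exact Or.inr ⟨hβ, hψw⟩
          · rcases hor with hB | hβ'
            · exact Or.inl ⟨hB, hβ, hψw⟩
            · exact absurd hβ' hβ⟩
        obtain rfl : b = i - a := by omega
        have ha : a < i + 1 := by omega
        refine ⟨⟨a, ha⟩, show _ ∧ _ from ⟨(h3 ⟨a, ha⟩ A v).mpr ?_, ?_⟩⟩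
        · exact hP
        · exact hQ

end Aux

/-- Counting quantifiers over finite disjunctions of bounds reduce to the bounded
counting fragment: for `k > 0`, any formula `∃^{≥i} y.((β₁ ∨ ⋯ ∨ β_k) ∧ φ)`, where
each `β_j` is of the form `E_j(t_j, y)` with `E_j` a transition relation and
`t_j ≠ y`, is logically equivalent to a Boolean combination of bounded counting
formulas of the same quantifier depth. -/
theorem counting_over_disjunctions_reduces (k i n : ℕ) (β : Fin (k + 1) → τ × Tm m n)
    (ψ : CFO R ar τ m (n + 1)) (hψ : IsB ψ) :
    ∃ χ : CFO R ar τ m n, IsBC χ ∧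
      χ.depth ≤ (CFO.cex i (.and
        (bigOrF fun j => CFO.tr (β j).1 (tmUp (β j).2) (Sum.inr (Fin.last n))) ψ)).depth ∧
      ∀ (A : BStr R ar τ m) (v : Fin n → A.W),
        (CFO.Sat A χ v ↔ CFO.Sat A (CFO.cex i (.and
          (bigOrF fun j => CFO.tr (β j).1 (tmUp (β j).2) (Sum.inr (Fin.last n))) ψ)) v) := by
  exact main_aux k i n β ψ hψ
end
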